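/- arXiv:1402.3018 — 7 statements merged into one kernel-verified Lean document; each statement's English description precedes it below -/
import Mathlib

section
/- Let q be a prime power, n ≥ 1, and let Y be a subset of F_q^n. Then for every integer d ≥ 0, HF(F_q^n, d) · |Y| ≤ HF(Y, d) · q^n. -/
/-!
Order the exponents `a ∈ ℕⁿ` degree-lexicographically. The footprint of `X ⊆ F_qⁿ` consists of
the exponents `a` for which `x ^ a`, as a function on `X`, is not a combination of smaller
monomials. Since the order is graded, the footprint monomials of degree `≤ d` form a basis of the
polynomial functions of degree `≤ d` on `X`, so `HF(X, d)` counts the footprint in degree `≤ d`,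
and the whole footprint has `|X|` elements. As `x_i ^ q = x_i` on `F_qⁿ`, the footprint lies in
the box `[0, q)ⁿ`; as multiplication by a monomial preserves the order, it is a down-set. The
inequality is then Daykin's inequality `|A| |B| ≤ |A ⊼ B| |A ⊻ B|` for the down-sets
`A` = footprint of `Y` and `B` = footprint of `F_qⁿ` in degree `≤ d`: here `A ⊼ B ⊆ A ∩ B`, and
`A ⊻ B` lies in the box.
-/

open MvPolynomial

noncomputable section

/-- The affine Hilbert function of an ideal `I`: the dimension of
`A_{≤d} / I_{≤d}`. -/
def affineHF {k : Type*} [Field k] {n : ℕ} (I : Ideal (MvPolynomial (Fin n) k)) (d : ℕ) : ℕ :=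
  Module.finrank k
    ((MvPolynomial.restrictTotalDegree (Fin n) k d) ⧸
      (Submodule.comap (MvPolynomial.restrictTotalDegree (Fin n) k d).subtype
        (Submodule.restrictScalars k I)))

/-- The affine Hilbert function of a set `X ⊆ k^n`. -/
def HF {k : Type*} [Field k] {n : ℕ} (X : Set (Fin n → k)) (d : ℕ) : ℕ :=
  affineHF (MvPolynomial.vanishingIdeal k X) d

/-- The degree `d` closure of `Y ⊆ k^n`. -/
def clDeg {k : Type*} [Field k] {n : ℕ} (d : ℕ) (Y : Set (Fin n → k)) :
    Set (Fin n → k) :=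
  {x | ∀ P : MvPolynomial (Fin n) k, P.totalDegree ≤ d →
    (∀ y ∈ Y, MvPolynomial.eval y P = 0) → MvPolynomial.eval x P = 0}

/-- The ideal `I^m(X)` of polynomials vanishing to order at least `m`
at every point of `X`. -/
def orderIdeal {k : Type*} [Field k] {n : ℕ} (m : ℕ) (X : Set (Fin n → k)) :
    Ideal (MvPolynomial (Fin n) k) :=
  ⨅ x ∈ X, (MvPolynomial.vanishingIdeal k ({x} : Set (Fin n → k))) ^ m

/-- The Hilbert function with multiplicity `m` of a set `X ⊆ k^n`. -/
def HFm {k : Type*} [Field k] {n : ℕ} (m : ℕ) (X : Set (Fin n → k)) (d : ℕ) : ℕ :=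
  affineHF (orderIdeal m X) d

/-- `cl_d^{ℓ,m}(Y)`: points where all degree-`≤ d` polynomials vanishing
to order `m` on `Y` vanish to order `ℓ`. -/
def clDegMult {k : Type*} [Field k] {n : ℕ} (d l m : ℕ) (Y : Set (Fin n → k)) :
    Set (Fin n → k) :=
  {x | ∀ P : MvPolynomial (Fin n) k, P.totalDegree ≤ d → P ∈ orderIdeal m Y →
    P ∈ (MvPolynomial.vanishingIdeal k ({x} : Set (Fin n → k))) ^ l}

/-- An affine line in `k^n`. -/
def IsAffineLine {k : Type*} [Field k] {n : ℕ} (L : Set (Fin n → k)) : Prop :=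
  ∃ a v : Fin n → k, v ≠ 0 ∧ L = {p | ∃ t : k, p = a + t • v}

/-- A curve of degree at most `Λ` in `k^n`. -/
def IsCurveOfDegree {k : Type*} [Field k] {n : ℕ} (Λ : ℕ) (C : Set (Fin n → k)) : Prop :=
  ∃ f : Fin n → Polynomial k, (∀ i, (f i).natDegree ≤ Λ) ∧
    C = Set.range fun t : k => fun i => (f i).eval t

open Submodule

instance {ι M : Type*} [Zero M] [DistribLattice M] : DistribLattice (ι →₀ M) where
  le_sup_inf f g h i := le_sup_inf (x := f i) (y := g i) (z := h i)

open Finset FinsetFamily in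
theorem IsLowerSet.ncard_mul_ncard_le {α : Type*} [DistribLattice α] {s t u : Set α}
    (hs : IsLowerSet s) (ht : IsLowerSet t) (hsf : s.Finite) (htf : t.Finite) (huf : u.Finite)
    (hstu : ∀ a ∈ s, ∀ b ∈ t, a ⊔ b ∈ u) :
    s.ncard * t.ncard ≤ (s ∩ t).ncard * u.ncard := by
  classical
  lift s to Finset α using hsf
  lift t to Finset α using htf
  lift u to Finset α using huf
  have hinf : s ⊼ t ⊆ s ∩ t := Finset.infs_subset_iff.2 fun a ha b hb =>
    Finset.mem_inter.2 ⟨hs inf_le_left ha, ht inf_le_right hb⟩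
  have hsup : s ⊻ t ⊆ u := Finset.sups_subset_iff.2 hstu
  simp only [← Finset.coe_inter, Set.ncard_coe_finset]
  calc #s * #t ≤ #(s ⊼ t) * #(s ⊻ t) := Finset.le_card_infs_mul_card_sups s t
    _ ≤ #(s ∩ t) * #u := Nat.mul_le_mul (Finset.card_le_card hinf) (Finset.card_le_card hsup)

theorem Finsupp.ncard_setOf_forall_lt {σ : Type*} [Finite σ] (q : ℕ) :
    {a : σ →₀ ℕ | ∀ i, a i < q}.ncard = q ^ Nat.card σ := by
  let e : {a : σ →₀ ℕ | ∀ i, a i < q} ≃ (σ → Fin q) :=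
    (Finsupp.equivFunOnFinite.subtypeEquiv fun _ => Iff.rfl).trans
      (Equiv.subtypePiEquivPi.trans (Equiv.piCongrRight fun _ => Fin.equivSubtype.symm))
  rw [← Nat.card_coe_set_eq, Nat.card_congr e, Nat.card_fun, Nat.card_eq_fintype_card,
    Fintype.card_fin]

section Pivots

variable (K : Type*) {M ι : Type*} [Field K] [AddCommGroup M] [Module K M] [LinearOrder ι]

def pivots (v : ι → M) : Set ι := {i | v i ∉ span K (v '' Set.Iio i)}

variable {K} (v : ι → M)

theorem linearIndepOn_pivots : LinearIndepOn K v (pivots K v) := by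
  classical
  refine linearIndepOn_of_finite _ fun t ht htf => ?_
  lift t to Finset ι using htf
  induction t using Finset.induction_on_max with
  | empty => simp
  | insert a s hlt ih =>
    rw [Finset.coe_insert] at ht ⊢
    refine (ih ((Set.subset_insert _ _).trans ht)).insert fun hspan => ht (Set.mem_insert _ _) ?_
    exact span_mono (Set.image_mono fun x hx => hlt x hx) hspan

theorem span_image_inter_pivots [WellFoundedLT ι] {S : Set ι} (hS : IsLowerSet S) :
    span K (v '' (S ∩ pivots K v)) = span K (v '' S) := by
  refine le_antisymm (span_mono (Set.image_mono Set.inter_subset_left)) (span_le.2 ?_)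
  rintro _ ⟨i, hiS, rfl⟩
  induction i using WellFoundedLT.induction with
  | _ i ih =>
    by_cases hi : i ∈ pivots K v
    · exact subset_span ⟨i, ⟨hiS, hi⟩, rfl⟩
    · refine span_le.2 ?_ (not_not.1 hi)
      rintro _ ⟨j, hj, rfl⟩
      exact ih j hj (hS (le_of_lt hj) hiS)

theorem finrank_span_image_eq_ncard_inter_pivots [WellFoundedLT ι] [Module.Finite K M]
    {S : Set ι} (hS : IsLowerSet S) :
    Module.finrank K (span K (v '' S)) = (S ∩ pivots K v).ncard := by
  rw [← span_image_inter_pivots v hS]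
  have hli : LinearIndepOn K v (S ∩ pivots K v) :=
    (linearIndepOn_pivots v).mono Set.inter_subset_right
  have := hli.finite
  have := Fintype.ofFinite ↥(S ∩ pivots K v)
  rw [Set.image_eq_range, finrank_span_eq_card hli, Set.ncard_eq_toFinset_card', Set.toFinset_card]

theorem notMem_pivots_of_map (f : M →ₗ[K] M) {g : ι → ι} (hg : StrictMono g)
    (hfg : ∀ i, f (v i) = v (g i)) {i : ι} (hi : i ∉ pivots K v) : g i ∉ pivots K v := by
  refine not_not.2 ?_
  rw [← hfg]
  refine span_mono ?_ (apply_mem_span_image_of_mem_span f (not_not.1 hi))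
  rintro _ ⟨_, ⟨j, hj, rfl⟩, rfl⟩
  exact ⟨g j, hg hj, (hfg j).symm⟩

theorem notMem_pivots_of_eq {i j : ι} (hji : j < i) (h : v i = v j) : i ∉ pivots K v :=
  fun hi => hi (subset_span ⟨j, hji, h.symm⟩)

end Pivots

section Footprint

variable {K σ : Type*} [Field K]

def evalOn (X : Set (σ → K)) : MvPolynomial σ K →ₐ[K] (X → K) :=
  AlgHom.pi fun x => aeval (x : σ → K)

@[simp]
theorem evalOn_apply (X : Set (σ → K)) (P : MvPolynomial σ K) (x : X) :
    evalOn X P x = eval (x : σ → K) P := by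
  simp [evalOn]

theorem evalOn_surjective [Finite σ] [Fintype K] (X : Set (σ → K)) :
    Function.Surjective (evalOn X) := by
  classical
  intro f
  obtain ⟨P, -, hP⟩ := mem_map.1 ((map_restrict_dom_evalₗ K σ).ge
    (mem_top (x := fun x => if hx : x ∈ X then f ⟨x, hx⟩ else 0)))
  refine ⟨P, funext fun x => ?_⟩
  simpa using congrFun hP x

def monomialOn (X : Set (σ → K)) (a : DegLex (σ →₀ ℕ)) : X → K :=
  evalOn X (monomial (ofDegLex a) 1)

theorem monomialOn_add (X : Set (σ → K)) (a b : DegLex (σ →₀ ℕ)) :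
    monomialOn X (a + b) = monomialOn X a * monomialOn X b := by
  simp only [monomialOn, ofDegLex_add, ← map_mul, monomial_mul, mul_one]

theorem span_range_monomialOn [Finite σ] [Fintype K] (X : Set (σ → K)) :
    span K (Set.range (monomialOn X)) = ⊤ := by
  have hrange : Set.range (monomialOn X) =
      (evalOn X).toLinearMap '' Set.range (basisMonomials σ K) := by
    rw [← Set.range_comp, coe_basisMonomials]
    exact ofDegLex.surjective.range_comp ((evalOn X).toLinearMap ∘ fun s => monomial s 1)
  rw [hrange, span_image, (basisMonomials σ K).span_eq, Submodule.map_top,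
    LinearMap.range_eq_top]
  exact evalOn_surjective X

variable [LinearOrder σ]

/-- The exponents of the standard monomials of the vanishing ideal of `X` for the
degree-lexicographic order. -/
def footprint (X : Set (σ → K)) : Set (σ →₀ ℕ) :=
  toDegLex ⁻¹' pivots K (monomialOn X)

theorem isLowerSet_footprint (X : Set (σ → K)) : IsLowerSet (footprint X) := by
  intro a b hba ha
  by_contra hb
  obtain ⟨c, rfl⟩ := exists_add_of_le hba
  exact notMem_pivots_of_map (monomialOn X) (LinearMap.mulRight K (monomialOn X (toDegLex c)))
    (g := (· + toDegLex c)) add_left_strictMono (fun i => (monomialOn_add X i _).symm) hb ha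

theorem footprint_subset [Fintype K] (X : Set (σ → K)) :
    footprint X ⊆ {a | ∀ i, a i < Fintype.card K} := by
  intro a ha i
  by_contra! hi
  set e := a - Finsupp.single i (Fintype.card K)
  have hea : e + Finsupp.single i (Fintype.card K) = a :=
    tsub_add_cancel_of_le (Finsupp.single_le_iff.2 hi)
  refine notMem_pivots_of_eq (monomialOn X) (i := toDegLex a)
    (j := toDegLex (e + Finsupp.single i 1)) ?_ ?_ ha
  · rw [← hea, toDegLex_add, toDegLex_add]
    refine add_lt_add_right ?_ _
    simp only [Finsupp.DegLex.lt_iff, ofDegLex_toDegLex, Finsupp.degree_single]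
    exact Or.inl Fintype.one_lt_card
  · rw [← hea]
    ext x
    simp [monomialOn, monomial_add_single, FiniteField.pow_card]

theorem ncard_footprint [Finite σ] [Fintype K] (X : Set (σ → K)) :
    (footprint X).ncard = X.ncard := by
  have := Fintype.ofFinite X
  have h := finrank_span_image_eq_ncard_inter_pivots (K := K) (monomialOn X) isLowerSet_univ
  rw [Set.image_univ, span_range_monomialOn, finrank_top, Module.finrank_fintype_fun_eq_card,
    Set.univ_inter] at h
  rw [footprint, Set.ncard_preimage_of_injective_subset_range toDegLex.injective
    (by simp), ← h, Set.ncard_eq_toFinset_card', Set.toFinset_card]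

end Footprint

section HilbertFunction

variable {K : Type*} [Field K] {n : ℕ}

theorem HF_eq_finrank_span (X : Set (Fin n → K)) (d : ℕ) :
    HF X d = Module.finrank K
      (span K ((fun a => evalOn X (monomial a 1)) '' {a : Fin n →₀ ℕ | a.degree ≤ d})) := by
  set Φ := (evalOn X).toLinearMap ∘ₗ (restrictTotalDegree (Fin n) K d).subtype
  have hker : comap (restrictTotalDegree (Fin n) K d).subtype
      ((vanishingIdeal K X).restrictScalars K) = LinearMap.ker Φ := by
    ext P
    simp [Φ, mem_vanishingIdeal_iff, funext_iff]
  have hrange : LinearMap.range Φ =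
      span K ((fun a => evalOn X (monomial a 1)) '' {a : Fin n →₀ ℕ | a.degree ≤ d}) := by
    rw [LinearMap.range_comp, range_subtype, restrictTotalDegree, restrictSupport_eq_span,
      ← span_image, Set.image_image]
    rfl
  rw [HF, affineHF, hker, Φ.quotKerEquivRange.finrank_eq, hrange]

theorem HF_eq_ncard_footprint_inter [Fintype K] (X : Set (Fin n → K)) (d : ℕ) :
    HF X d = (footprint X ∩ {a | a.degree ≤ d}).ncard := by
  have hlower : IsLowerSet {a : DegLex (Fin n →₀ ℕ) | (ofDegLex a).degree ≤ d} :=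
    fun a b hba ha => (Finsupp.DegLex.monotone_degree hba).trans ha
  have h := finrank_span_image_eq_ncard_inter_pivots (K := K) (monomialOn X) hlower
  have hset : footprint X ∩ {a | a.degree ≤ d} =
      toDegLex ⁻¹' ({a | (ofDegLex a).degree ≤ d} ∩ pivots K (monomialOn X)) :=
    Set.inter_comm _ _
  rw [hset, Set.ncard_preimage_of_injective_subset_range toDegLex.injective (by simp), ← h,
    HF_eq_finrank_span]
  rfl

end HilbertFunction

theorem statement0_general (K : Type*) [Field K] [Fintype K] (q n : ℕ) (hq : Fintype.card K = q)
    (Y : Set (Fin n → K)) (d : ℕ) :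
    HF (Set.univ : Set (Fin n → K)) d * Y.ncard ≤ HF Y d * q ^ n := by
  subst hq
  set grid := {a : Fin n →₀ ℕ | ∀ i, a i < Fintype.card K}
  set L := {a : Fin n →₀ ℕ | a.degree ≤ d}
  have hgrid : grid.ncard = Fintype.card K ^ n := by
    simpa using Finsupp.ncard_setOf_forall_lt (σ := Fin n) (Fintype.card K)
  have hgrid_finite : grid.Finite := Set.finite_of_ncard_ne_zero (by rw [hgrid]; positivity)
  have hL : IsLowerSet L := fun a b hba ha => (Finsupp.degree_mono hba).trans ha
  rw [HF_eq_ncard_footprint_inter, HF_eq_ncard_footprint_inter, ← ncard_footprint Y, mul_comm,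
    ← hgrid]
  calc (footprint Y).ncard * (footprint Set.univ ∩ L).ncard
      ≤ (footprint Y ∩ (footprint Set.univ ∩ L)).ncard * grid.ncard :=
        (isLowerSet_footprint Y).ncard_mul_ncard_le ((isLowerSet_footprint _).inter hL)
          (hgrid_finite.subset (footprint_subset Y))
          (hgrid_finite.subset (Set.inter_subset_left.trans (footprint_subset _))) hgrid_finite
          fun a ha b hb i => by simpa using ⟨footprint_subset Y ha i, footprint_subset _ hb.1 i⟩
    _ ≤ (footprint Y ∩ L).ncard * grid.ncard := by
        gcongr
        · exact (hgrid_finite.subset (footprint_subset Y)).inter_of_left L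
        · exact Set.inter_subset_right

/-- `HF(F_q^n, d) · |Y| ≤ HF(Y, d) · q^n`. -/
theorem statement0 (K : Type*) [Field K] [Fintype K] (q n : ℕ) (hq : Fintype.card K = q)
    (hn : 1 ≤ n) (Y : Set (Fin n → K)) (d : ℕ) :
    HF (Set.univ : Set (Fin n → K)) d * Y.ncard ≤ HF Y d * q ^ n :=
  statement0_general K q n hq Y d

end
end

section
/- Let q be a prime power, n ≥ 1, and let Y be a subset of F_q^n. Then for every integer d ≥ 0, HF(F_q^n, d) · |cl_d(Y)| ≤ q^n · |Y|. -/
open MvPolynomial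

noncomputable section

/-! `HF(X, d)` is the rank of the evaluation functionals `P ↦ P(x)`, `x ∈ X`, on polynomials of
degree `≤ d`. Pick `B ⊆ 𝔽_q^n` whose functionals form a basis of the span of all of them, so that
`|B| = HF(𝔽_q^n, d)`. The substitution `P(X) ↦ P(t + X)` preserves degrees, so the functionals of a
translate `t + C` span a space of dimension at most `HF(C, d)`; hence `|B ∩ (t + C)| ≤ HF(C, d)`.
Summing over the `q^n` translates counts every pair of `B × C` once, so
`HF(𝔽_q^n, d) |C| ≤ q^n HF(C, d)`. For `C = cl_d(Y)` finally `HF(C, d) ≤ HF(Y, d) ≤ |Y|`. -/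

open Module Submodule Finset
open scoped Pointwise

theorem Finset.sum_card_inter_vadd {G : Type*} [AddGroup G] [DecidableEq G] [Fintype G]
    (B S : Finset G) : ∑ t : G, #(B ∩ (t +ᵥ S)) = #B * #S := by
  have hfib : #(B ×ˢ (-S)) = ∑ t : G, #{bs ∈ B ×ˢ (-S) | bs.1 + bs.2 = t} :=
    card_eq_sum_card_fiberwise fun _ _ => mem_coe.2 (mem_univ _)
  simp_rw [card_inter_vadd, ← card_add_eq]
  rw [← card_neg S, ← card_product, hfib]

section LinearIndependence

variable {G K M : Type*} [DivisionRing K] [AddCommGroup M] [Module K M] {v : G → M}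

theorem LinearIndepOn.finrank_span_image_finset_eq_card {T : Finset G}
    (hT : LinearIndepOn K v (T : Set G)) : finrank K (span K (v '' T)) = #T := by
  rw [Set.image_eq_range, finrank_span_eq_card hT]
  exact Fintype.card_coe T

theorem LinearIndepOn.card_le_finrank_span_image {T U : Finset G}
    (hT : LinearIndepOn K v (T : Set G)) (hTU : T ⊆ U) :
    #T ≤ finrank K (span K (v '' U)) := by
  have : FiniteDimensional K (span K (v '' U)) :=
    FiniteDimensional.span_of_finite K (U.finite_toSet.image v)
  rw [← hT.finrank_span_image_finset_eq_card]
  exact finrank_mono (span_mono (Set.image_mono (coe_subset.2 hTU)))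

variable (K v) in
theorem exists_finset_linearIndepOn_card_eq_finrank [Fintype G] :
    ∃ B : Finset G, LinearIndepOn K v (B : Set G) ∧ #B = finrank K (span K (Set.range v)) := by
  classical
  obtain ⟨b, -, -, hspan, hb⟩ :=
    exists_linearIndepOn_extension (linearIndepOn_empty K v) (Set.empty_subset Set.univ)
  have hB : LinearIndepOn K v (b.toFinset : Set G) := by simpa using hb
  have hb_span : span K (v '' b) = span K (Set.range v) :=
    le_antisymm (span_mono (Set.image_subset_range _ _)) (span_le.2 (by simpa using hspan))
  refine ⟨b.toFinset, hB, ?_⟩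
  rw [← hB.finrank_span_image_finset_eq_card, Set.coe_toFinset, hb_span]

theorem finrank_span_range_mul_card_le_of_vadd [AddGroup G] [DecidableEq G] [Fintype G]
    (S : Finset G)
    (hS : ∀ t : G, finrank K (span K (v '' ↑(t +ᵥ S))) ≤ finrank K (span K (v '' S))) :
    finrank K (span K (Set.range v)) * #S ≤ Fintype.card G * finrank K (span K (v '' S)) := by
  obtain ⟨B, hB, hcard⟩ := exists_finset_linearIndepOn_card_eq_finrank K v
  calc finrank K (span K (Set.range v)) * #S = ∑ t : G, #(B ∩ (t +ᵥ S)) := by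
        rw [sum_card_inter_vadd, hcard]
    _ ≤ ∑ _t : G, finrank K (span K (v '' S)) := sum_le_sum fun t _ =>
        ((hB.mono (by simp)).card_le_finrank_span_image inter_subset_right).trans (hS t)
    _ = Fintype.card G * finrank K (span K (v '' S)) := by simp

end LinearIndependence

theorem MvPolynomial.totalDegree_aeval_le {R σ τ : Type*} [CommSemiring R]
    {g : σ → MvPolynomial τ R} (hg : ∀ i, (g i).totalDegree ≤ 1) (P : MvPolynomial σ R) :
    (aeval g P).totalDegree ≤ P.totalDegree := by
  conv_lhs => rw [P.as_sum, map_sum]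
  refine totalDegree_finsetSum_le fun s hs => ?_
  rw [aeval_monomial, algebraMap_eq]
  have hprod : (s.prod fun i k => g i ^ k).totalDegree ≤ s.sum fun _ k => k := by
    refine (totalDegree_finsetProd _ _).trans (sum_le_sum fun i _ => ?_)
    exact (totalDegree_pow _ _).trans (by simpa using Nat.mul_le_mul_left (s i) (hg i))
  calc _ ≤ (C (coeff s P) : MvPolynomial τ R).totalDegree
          + (s.prod fun i k => g i ^ k).totalDegree := totalDegree_mul _ _
    _ ≤ P.totalDegree := by
        rw [totalDegree_C, zero_add]
        exact hprod.trans (le_totalDegree hs)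

namespace MvPolynomial

variable {K σ : Type*} [Field K]

def taylorRestrict (d : ℕ) (t : σ → K) :
    restrictTotalDegree σ K d →ₗ[K] restrictTotalDegree σ K d :=
  (aeval fun i => C (t i) + X i).toLinearMap.restrict fun P hP => by
    rw [mem_restrictTotalDegree] at hP ⊢
    refine (totalDegree_aeval_le (fun i => ?_) P).trans hP
    exact (totalDegree_add _ _).trans (by simp [totalDegree_C, totalDegree_X])

variable (K) in
def evalDual (d : ℕ) (x : σ → K) : Dual K (restrictTotalDegree σ K d) :=
  (aeval x).toLinearMap ∘ₗ (restrictTotalDegree σ K d).subtype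

theorem evalDual_add (d : ℕ) (t x : σ → K) :
    evalDual K d (t + x) = (taylorRestrict d t).dualMap (evalDual K d x) := by
  ext P
  simp only [evalDual, LinearMap.dualMap_apply, LinearMap.comp_apply, taylorRestrict,
    LinearMap.restrict_apply, Submodule.subtype_apply, AlgHom.toLinearMap_apply]
  rw [← AlgHom.comp_apply]
  congr 1
  ext i
  simp

theorem finrank_span_evalDual_vadd_le [Finite σ] (S : Set (σ → K)) (d : ℕ) (t : σ → K) :
    finrank K (span K (evalDual K d '' (t +ᵥ S))) ≤ finrank K (span K (evalDual K d '' S)) := by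
  have himage :
      evalDual K d '' (t +ᵥ S) = (taylorRestrict d t).dualMap '' (evalDual K d '' S) := by
    rw [← Set.image_vadd, Set.image_image, Set.image_image]
    exact Set.image_congr fun x _ => evalDual_add d t x
  rw [himage, ← map_span]
  exact finrank_map_le _ _

end MvPolynomial

section HilbertFunction

variable {K : Type*} [Field K] {n : ℕ}

theorem HF_eq_finrank_span_evalDual (X : Set (Fin n → K)) (d : ℕ) :
    HF X d = finrank K (span K (evalDual K d '' X)) := by
  set W := span K (evalDual K d '' X)
  have hN : comap (restrictTotalDegree (Fin n) K d).subtype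
      ((vanishingIdeal K X).restrictScalars K) = W.dualCoannihilator := by
    ext P
    rw [← SetLike.mem_coe (x := P) (p := W.dualCoannihilator), coe_dualCoannihilator_span]
    simp [evalDual, mem_vanishingIdeal_iff]
  have h₁ := W.dualCoannihilator.finrank_quotient_add_finrank
  have h₂ := Subspace.finrank_add_finrank_dualCoannihilator_eq W
  unfold HF affineHF
  rw [hN]
  omega

theorem HF_le_ncard {X : Set (Fin n → K)} (hX : X.Finite) (d : ℕ) : HF X d ≤ X.ncard := by
  have := hX.fintype
  rw [HF_eq_finrank_span_evalDual, Set.image_eq_range, ← Nat.card_coe_set_eq,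
    Nat.card_eq_fintype_card]
  exact finrank_range_le_card _

theorem HF_clDeg_le (Y : Set (Fin n → K)) (d : ℕ) : HF (clDeg d Y) d ≤ HF Y d := by
  refine LinearMap.finrank_le_finrank_of_surjective (f := factor ?_) (factor_surjective _)
  intro P hP
  simp only [mem_comap, Submodule.restrictScalars_mem, mem_vanishingIdeal_iff] at hP ⊢
  exact fun x hx => hx P ((mem_restrictTotalDegree _ _ _).1 P.2) hP

end HilbertFunction

theorem statement1_general (K : Type*) [Field K] [Fintype K] (q n : ℕ) (hq : Fintype.card K = q)
    (Y : Set (Fin n → K)) (d : ℕ) :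
    HF (Set.univ : Set (Fin n → K)) d * (clDeg d Y).ncard ≤ q ^ n * Y.ncard := by
  classical
  set C := clDeg d Y
  have hcard : Fintype.card (Fin n → K) = q ^ n := by simp [hq]
  calc HF Set.univ d * C.ncard = finrank K (span K (Set.range (evalDual K d))) * #C.toFinset := by
        rw [HF_eq_finrank_span_evalDual, Set.image_univ, Set.ncard_eq_toFinset_card']
    _ ≤ Fintype.card (Fin n → K) *
          finrank K (span K (evalDual K d '' (C.toFinset : Set (Fin n → K)))) :=
        finrank_span_range_mul_card_le_of_vadd _ fun t => by
          rw [coe_vadd_finset, Set.coe_toFinset]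
          exact finrank_span_evalDual_vadd_le C d t
    _ = q ^ n * HF C d := by rw [hcard, Set.coe_toFinset, HF_eq_finrank_span_evalDual]
    _ ≤ q ^ n * Y.ncard :=
        Nat.mul_le_mul_left _ ((HF_clDeg_le Y d).trans (HF_le_ncard Y.toFinite d))

/-- `HF(F_q^n, d) · |cl_d(Y)| ≤ q^n · |Y|`. -/
theorem statement1 (K : Type*) [Field K] [Fintype K] (q n : ℕ) (hq : Fintype.card K = q)
    (hn : 1 ≤ n) (Y : Set (Fin n → K)) (d : ℕ) :
    HF (Set.univ : Set (Fin n → K)) d * (clDeg d Y).ncard ≤ q ^ n * Y.ncard :=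
  statement1_general K q n hq Y d
end
end

section
/- Let k be an infinite field and let X be the union of L affine lines in k^n. If cl_d(X) = k^n, then C(d+n, n)/(d+1) ≤ L, where C(d+n, n) is the binomial coefficient. -/
open MvPolynomial

noncomputable section

/-!
A polynomial of degree `≤ d` restricts to a line `t ↦ a + t • v` as a univariate polynomial of
degree `≤ d`, i.e. a vector in `k^(d+1)`. If `cl_d(X) = k^n`, a polynomial of degree `≤ d`
vanishing on the `L` lines of `X` vanishes on all of `k^n`, so it is zero because `k` is infinite.
Restriction to the lines therefore embeds the `C(d+n, n)`-dimensional space of polynomials of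
degree `≤ d` into `k^(L(d+1))`.
-/

namespace Finsupp

theorem sum_eq_add_sum_tail {M : Type*} [AddCommMonoid M] {n : ℕ} (P : Fin (n + 1) →₀ M) :
    (P.sum fun _ e => e) = P 0 + P.tail.sum fun _ e => e := by
  conv_lhs => rw [← cons_tail P]
  exact sum_cons n P.tail (P 0)

def sumLeEquivSumEq (n d : ℕ) :
    {s : Fin n →₀ ℕ | (s.sum fun _ e => e) ≤ d} ≃
      {P : Fin (n + 1) →₀ ℕ // (P.sum fun _ => id) = d} where
  toFun s := ⟨cons (d - s.1.sum fun _ e => e) s.1, by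
    have : (s.1.sum fun _ e => e) ≤ d := s.2
    change (cons _ _).sum (fun _ e => e) = d
    rw [sum_cons]
    omega⟩
  invFun P := ⟨P.1.tail, by
    have h : (P.1.sum fun _ e => e) = d := P.2
    rw [sum_eq_add_sum_tail] at h
    change (P.1.tail.sum fun _ e => e) ≤ d
    omega⟩
  left_inv s := by simp
  right_inv := by
    rintro ⟨P, hP⟩
    have h : (P.sum fun _ e => e) = d := hP
    rw [sum_eq_add_sum_tail] at h
    ext1
    change cons _ P.tail = P
    rw [show d - (P.tail.sum fun _ e => e) = P 0 by omega, cons_tail]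

end Finsupp

namespace MvPolynomial

variable {R σ : Type*} [CommRing R]

theorem finrank_restrictTotalDegree [Nontrivial R] (n d : ℕ) :
    Module.finrank R (restrictTotalDegree (Fin n) R d) = (d + n).choose n := by
  rw [restrictTotalDegree, Module.finrank_eq_nat_card_basis (basisRestrictSupport R _),
    Nat.card_congr ((Finsupp.sumLeEquivSumEq n d).trans (Sym.equivNatSum (Fin (n + 1)) d).symm),
    Nat.card_eq_fintype_card, Sym.card_sym_eq_choose, Fintype.card_fin,
    show n + 1 + d - 1 = d + n by omega, Nat.choose_symm_add]

theorem natDegree_aeval_le_totalDegree {g : σ → Polynomial R}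
    (hg : ∀ i, (g i).natDegree ≤ 1) (P : MvPolynomial σ R) :
    (aeval g P).natDegree ≤ P.totalDegree := by
  conv_lhs => rw [P.as_sum, map_sum]
  refine Polynomial.natDegree_sum_le_of_forall_le _ _ fun s hs => ?_
  rw [aeval_monomial, ← Polynomial.C_eq_algebraMap]
  calc _ ≤ (s.prod fun i e => g i ^ e).natDegree := Polynomial.natDegree_C_mul_le _ _
    _ ≤ s.sum fun i e => e * 1 :=
        (Polynomial.natDegree_prod_le _ _).trans (Finset.sum_le_sum fun i _ =>
          Polynomial.natDegree_pow_le_of_le _ (hg i))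
    _ ≤ P.totalDegree := by simpa using le_totalDegree hs

def restrictToLine (a v : σ → R) : MvPolynomial σ R →ₐ[R] Polynomial R :=
  aeval fun i => Polynomial.C (a i) + Polynomial.C (v i) * Polynomial.X

@[simp]
theorem eval_restrictToLine (a v : σ → R) (P : MvPolynomial σ R) (t : R) :
    (restrictToLine a v P).eval t = eval (a + t • v) P := by
  rw [← Polynomial.coe_aeval_eq_eval, restrictToLine, ← AlgHom.comp_apply, comp_aeval]
  change eval _ P = _
  congr
  funext i
  simp only [Polynomial.coe_aeval_eq_eval, Polynomial.eval_add, Polynomial.eval_mul,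
    Polynomial.eval_C, Polynomial.eval_X, Pi.add_apply, Pi.smul_apply, smul_eq_mul, mul_comm]

theorem natDegree_restrictToLine_le (a v : σ → R) (P : MvPolynomial σ R) :
    (restrictToLine a v P).natDegree ≤ P.totalDegree :=
  natDegree_aeval_le_totalDegree (fun i => (Polynomial.natDegree_add_le _ _).trans
    (max_le (by simp) ((Polynomial.natDegree_C_mul_le _ _).trans Polynomial.natDegree_X_le))) P

theorem restrictToLine_mem_degreeLT (a v : σ → R) {d : ℕ} {P : MvPolynomial σ R}
    (hP : P ∈ restrictTotalDegree σ R d) :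
    restrictToLine a v P ∈ Polynomial.degreeLT R (d + 1) := by
  have hdeg : (restrictToLine a v P).natDegree ≤ d :=
    (natDegree_restrictToLine_le a v P).trans ((mem_restrictTotalDegree σ d P).mp hP)
  rw [Polynomial.mem_degreeLT]
  exact Polynomial.degree_le_natDegree.trans_lt (WithBot.coe_lt_coe.mpr (Nat.lt_succ_of_le hdeg))

def restrictToLines {ι : Type*} (a v : ι → σ → R) (d : ℕ) :
    restrictTotalDegree σ R d →ₗ[R] ι → Fin (d + 1) → R :=
  LinearMap.pi fun i => (Polynomial.degreeLTEquiv R (d + 1)).toLinearMap ∘ₗ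
    LinearMap.codRestrict _
      ((restrictToLine (a i) (v i)).toLinearMap ∘ₗ (restrictTotalDegree σ R d).subtype)
      fun P => restrictToLine_mem_degreeLT (a i) (v i) P.2

theorem eq_zero_of_clDeg_eq_univ {k : Type*} [Field k] [Infinite k] {n d : ℕ}
    {Y : Set (Fin n → k)} (hY : clDeg d Y = Set.univ) {P : MvPolynomial (Fin n) k}
    (hP : P.totalDegree ≤ d) (hPY : ∀ y ∈ Y, eval y P = 0) : P = 0 :=
  funext fun x => by
    rw [map_zero]
    exact (hY.symm ▸ Set.mem_univ x : x ∈ clDeg d Y) P hP hPY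

theorem restrictToLines_injective {k ι : Type*} [Field k] [Infinite k] {n d : ℕ}
    {a v : ι → Fin n → k}
    (hcl : clDeg d (⋃ i, {p | ∃ t : k, p = a i + t • v i}) = Set.univ) :
    Function.Injective (restrictToLines a v d) := by
  rw [← LinearMap.ker_eq_bot, LinearMap.ker_eq_bot']
  rintro ⟨P, hP⟩ hzero
  ext1
  refine eq_zero_of_clDeg_eq_univ hcl ((mem_restrictTotalDegree _ d P).mp hP) ?_
  simp only [Set.mem_iUnion, Set.mem_ofPred_eq]
  rintro _ ⟨i, t, rfl⟩
  have hi : restrictToLine (a i) (v i) P = 0 := congrArg Subtype.val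
    ((Polynomial.degreeLTEquiv k (d + 1)).map_eq_zero_iff.mp (congrFun hzero i))
  rw [← eval_restrictToLine, hi, Polynomial.eval_zero]

end MvPolynomial

/-- over an infinite field, if `X` is a union of `L` lines and
`cl_d(X) = k^n`, then `C(d+n, n)/(d+1) ≤ L`. -/
theorem statement13 (k : Type*) [Field k] [Infinite k] (n L : ℕ)
    (ℓ : Fin L → Set (Fin n → k)) (hℓ : ∀ i, IsAffineLine (ℓ i)) (d : ℕ)
    (hcl : clDeg d (⋃ i, ℓ i) = Set.univ) :
    (((d + n).choose n : ℝ)) / ((d : ℝ) + 1) ≤ (L : ℝ) := by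
  choose a v _ hline using hℓ
  obtain rfl : ℓ = fun i => {p | ∃ t : k, p = a i + t • v i} := funext hline
  have hcount : (d + n).choose n ≤ L * (d + 1) := by
    have := LinearMap.finrank_le_finrank_of_injective (restrictToLines_injective hcl)
    simpa [finrank_restrictTotalDegree, Module.finrank_pi_fintype] using this
  rw [div_le_iff₀ (by positivity)]
  exact_mod_cast hcount

end
end

section
/- Let k be a field and let Y be a finite subset of k^n with |Y| = s ≥ 1 and let m ≥ 1. Then for every integer d ≥ 2ms − m − s, HF^m(Y, d) = C(m+n−1, n) · s, where C(m+n−1, n) is the binomial coefficient. -/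
open MvPolynomial

noncomputable section

/-!
After translating `y` to the origin, `𝔪_y^m` is spanned by the monomials of degree `≥ m`, so
the polynomials of degree `< m` form a system of representatives of `A ⧸ 𝔪_y^m`, which
therefore has dimension `C(m + n - 1, n)`. The kernel of `A_{≤d} → ∏_{y ∈ Y} A ⧸ 𝔪_y^m` is
`I^m(Y)_{≤d}`, so it remains to see that this map is onto. Given `y ∈ Y`, the product `Q` of
`s - 1` affine linear forms vanishing at the other points of `Y` and not at `y` is invertible
modulo the maximal ideal `𝔪_y`, hence `Q^m` is invertible modulo `𝔪_y^m`: for any `f`, some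
`h` of degree `< m` makes `h Q^m` congruent to `f` at `y` and to `0` at the other points. Its
degree is at most `ms - 1 ≤ 2ms - m - s`.
-/

lemma Ideal.exists_mul_pow_sub_one_mem_pow {A : Type*} [CommRing A] {M : Ideal A}
    (hM : M.IsMaximal) {Q : A} (hQ : Q ∉ M) (m : ℕ) : ∃ w, w * Q ^ m - 1 ∈ M ^ m := by
  have hcop : IsCoprime (Ideal.span {Q}) M := by
    rwa [Ideal.isCoprime_iff_codisjoint, codisjoint_comm, ← hM.out.not_le_iff_codisjoint,
      Ideal.span_singleton_le_iff_mem]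
  obtain ⟨a, ha, b, hb, hab⟩ := Ideal.isCoprime_iff_exists.mp (hcop.pow (m := m) (n := m))
  rw [Ideal.span_singleton_pow] at ha
  obtain ⟨w, rfl⟩ := Ideal.mem_span_singleton'.mp ha
  exact ⟨w, by rw [← hab, sub_add_cancel_left]; exact neg_mem hb⟩

lemma Finsupp.degree_option {σ : Type*} (w : Option σ →₀ ℕ) :
    w.degree = w none + w.some.degree :=
  Finsupp.sum_option_index w (fun _ e => e) (fun _ => rfl) (fun _ _ _ => rfl)

def Finsupp.degreeLEEquivOption (σ : Type*) (D : ℕ) :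
    {u : σ →₀ ℕ // u.degree ≤ D} ≃ {w : Option σ →₀ ℕ // w.degree = D} where
  toFun u := ⟨u.1.optionElim (D - u.1.degree), by
    have := u.2
    rw [Finsupp.degree_option, Finsupp.optionElim_apply_none, Finsupp.some_optionElim]
    omega⟩
  invFun w := ⟨w.1.some, by have := w.2; rw [Finsupp.degree_option] at this; omega⟩
  left_inv u := by ext1; simp
  right_inv w := by
    have := w.2
    rw [Finsupp.degree_option] at this
    ext1
    simp [← this]

namespace MvPolynomial

lemma totalDegree_aeval_le_of_totalDegree_le_one {σ τ R : Type*} [CommSemiring R]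
    {g : σ → MvPolynomial τ R} (hg : ∀ i, (g i).totalDegree ≤ 1) (p : MvPolynomial σ R) :
    (aeval g p).totalDegree ≤ p.totalDegree := by
  conv_lhs => rw [p.as_sum, map_sum]
  refine totalDegree_finsetSum_le fun u hu => ?_
  rw [aeval_monomial, ← Algebra.smul_def]
  calc (coeff u p • u.prod fun i e => g i ^ e).totalDegree
      ≤ ∑ i ∈ u.support, (g i ^ u i).totalDegree :=
        (totalDegree_smul_le _ _).trans (totalDegree_finsetProd _ _)
    _ ≤ ∑ i ∈ u.support, u i := Finset.sum_le_sum fun i _ =>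
        (totalDegree_pow _ _).trans (by simpa using Nat.mul_le_mul_left (u i) (hg i))
    _ ≤ p.totalDegree := le_totalDegree hu

lemma finrank_restrictTotalDegree_s14 {σ R : Type*} [Fintype σ] [CommRing R] [Nontrivial R]
    (D : ℕ) :
    Module.finrank R (restrictTotalDegree σ R D) =
      (D + Fintype.card σ).choose (Fintype.card σ) := by
  classical
  let b : Module.Basis {u : σ →₀ ℕ // u.degree ≤ D} R (restrictTotalDegree σ R D) :=
    basisRestrictSupport R _
  rw [Module.finrank_eq_nat_card_basis b,
    Nat.card_congr ((Finsupp.degreeLEEquivOption σ D).trans (Sym.equivNatSum (Option σ) D).symm),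
    Nat.card_eq_fintype_card, Sym.card_sym_eq_choose, Fintype.card_option,
    Nat.add_right_comm, Nat.add_sub_cancel, add_comm D, Nat.choose_symm_add]

section CommRing

variable {σ R : Type*} [CommRing R]

def translate (y : σ → R) : MvPolynomial σ R ≃ₐ[R] MvPolynomial σ R :=
  AlgEquiv.ofAlgHom (aeval fun i => X i + C (y i)) (aeval fun i => X i + C (-y i))
    (by ext i; simp) (by ext i; simp)

lemma translate_symm (y : σ → R) : (translate y).symm = translate (-y) :=
  AlgEquiv.ext fun _ => by simp [translate]

lemma eval_translate (x y : σ → R) (p : MvPolynomial σ R) :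
    eval x (translate y p) = eval (x + y) p := by
  change eval₂Hom (RingHom.id R) x (bind₁ _ p) = _
  rw [eval₂Hom_bind₁]
  congr 2
  funext i
  simp

lemma totalDegree_translate_le (y : σ → R) (p : MvPolynomial σ R) :
    (translate y p).totalDegree ≤ p.totalDegree := by
  refine totalDegree_aeval_le_of_totalDegree_le_one (fun i => ?_) p
  refine (totalDegree_add _ _).trans (max_le ?_ (by simp))
  exact (totalDegree_monomial_le _ _).trans (by simp)

lemma exists_totalDegree_le_sub_mem_pow_idealOfVars (D : ℕ) (p : MvPolynomial σ R) :
    ∃ q : MvPolynomial σ R, q.totalDegree ≤ D ∧ p - q ∈ idealOfVars σ R ^ (D + 1) := by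
  refine ⟨∑ j ∈ Finset.range (D + 1), homogeneousComponent j p, ?_, ?_⟩
  · refine totalDegree_finsetSum_le fun j hj => ?_
    exact (homogeneousComponent_isHomogeneous j p).totalDegree_le.trans
      (Nat.lt_succ_iff.mp (Finset.mem_range.mp hj))
  · rw [mem_pow_idealOfVars_iff']
    intro u hu
    simp [coeff_sum, coeff_homogeneousComponent, Finset.mem_range.mpr hu]

lemma eq_zero_of_totalDegree_le_of_mem_pow_idealOfVars {D : ℕ} {p : MvPolynomial σ R}
    (hp : p.totalDegree ≤ D) (hmem : p ∈ idealOfVars σ R ^ (D + 1)) : p = 0 := by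
  ext u
  by_cases hu : u.degree < D + 1
  · exact (mem_pow_idealOfVars_iff' _ _).mp hmem u hu
  · exact coeff_eq_zero_of_totalDegree_lt (by rw [← Finsupp.degree_apply]; omega)

lemma exists_totalDegree_le_eval_eq_zero_eval_ne_zero [IsDomain R] (S : Finset (σ → R))
    {y : σ → R} (hy : y ∉ S) :
    ∃ Q : MvPolynomial σ R,
      Q.totalDegree ≤ S.card ∧ (∀ z ∈ S, eval z Q = 0) ∧ eval y Q ≠ 0 := by
  classical
  induction S using Finset.induction_on with
  | empty => exact ⟨1, by simp⟩
  | insert z S hz ih =>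
    obtain ⟨Q, hdeg, hS, hQy⟩ := ih (fun h => hy (Finset.mem_insert_of_mem h))
    have hzy : z ≠ y := fun h => hy (h ▸ Finset.mem_insert_self z S)
    obtain ⟨i, hi⟩ := Function.ne_iff.mp hzy
    refine ⟨(X i - C (z i)) * Q, ?_, ?_, ?_⟩
    · have hlin : (X i - C (z i) : MvPolynomial σ R).totalDegree ≤ 1 :=
        (totalDegree_sub _ _).trans (by simp [totalDegree_X])
      have := totalDegree_mul (X i - C (z i)) Q
      rw [Finset.card_insert_of_notMem hz]
      omega
    · intro x hx
      rcases Finset.mem_insert.mp hx with rfl | hx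
      · simp
      · simp [hS x hx]
    · simp [hQy, sub_eq_zero, Ne.symm hi]

end CommRing

section Field

variable {σ k : Type*} [Field k]

lemma vanishingIdeal_singleton_zero :
    vanishingIdeal k ({0} : Set (σ → k)) = idealOfVars σ k := by
  ext p
  rw [mem_vanishingIdeal_singleton_iff, ← pow_one (idealOfVars σ k), mem_pow_idealOfVars_iff']
  simp [Finsupp.degree_eq_zero_iff, ← constantCoeff_eq]

lemma comap_translate_vanishingIdeal_singleton (x y : σ → k) :
    (vanishingIdeal k {x}).comap (translate y) = vanishingIdeal k {x + y} := by
  ext p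
  simp [eval_translate]

lemma translate_mem_pow_vanishingIdeal_singleton_iff (x y : σ → k) (m : ℕ)
    (p : MvPolynomial σ k) :
    translate y p ∈ vanishingIdeal k {x} ^ m ↔ p ∈ vanishingIdeal k {x + y} ^ m := by
  refine ⟨fun h => ?_, fun h => ?_⟩
  · have h' : translate y p ∈ (vanishingIdeal k {x + y}).comap (translate (-y)) ^ m := by
      rwa [comap_translate_vanishingIdeal_singleton, add_neg_cancel_right]
    simpa [← translate_symm] using Ideal.le_comap_pow (translate (-y)) m h'
  · exact Ideal.le_comap_pow (translate y) m (by rwa [comap_translate_vanishingIdeal_singleton])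

lemma translate_mem_pow_idealOfVars_iff (y : σ → k) (m : ℕ) (p : MvPolynomial σ k) :
    translate y p ∈ idealOfVars σ k ^ m ↔ p ∈ vanishingIdeal k {y} ^ m := by
  rw [← vanishingIdeal_singleton_zero, translate_mem_pow_vanishingIdeal_singleton_iff, zero_add]

lemma exists_totalDegree_le_sub_mem_pow_vanishingIdeal_singleton (y : σ → k) (D : ℕ)
    (p : MvPolynomial σ k) :
    ∃ q : MvPolynomial σ k, q.totalDegree ≤ D ∧ p - q ∈ vanishingIdeal k {y} ^ (D + 1) := by
  obtain ⟨q, hq, hpq⟩ :=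
    exists_totalDegree_le_sub_mem_pow_idealOfVars D (translate y p)
  refine ⟨translate (-y) q, (totalDegree_translate_le _ _).trans hq, ?_⟩
  rwa [← translate_mem_pow_idealOfVars_iff, map_sub, ← translate_symm,
    AlgEquiv.apply_symm_apply]

lemma eq_zero_of_totalDegree_le_of_mem_pow_vanishingIdeal_singleton {y : σ → k} {D : ℕ}
    {p : MvPolynomial σ k} (hp : p.totalDegree ≤ D)
    (hmem : p ∈ vanishingIdeal k {y} ^ (D + 1)) : p = 0 :=
  (translate y).injective <| by
    rw [map_zero]
    exact eq_zero_of_totalDegree_le_of_mem_pow_idealOfVars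
      ((totalDegree_translate_le _ _).trans hp)
      ((translate_mem_pow_idealOfVars_iff _ _ _).mpr hmem)

def restrictTotalDegreeEquivQuotient (y : σ → k) (D : ℕ) :
    restrictTotalDegree σ k D ≃ₗ[k] MvPolynomial σ k ⧸ vanishingIdeal k {y} ^ (D + 1) :=
  LinearEquiv.ofBijective
    ((Ideal.Quotient.mkₐ k _).toLinearMap ∘ₗ (restrictTotalDegree σ k D).subtype)
    ⟨(injective_iff_map_eq_zero _).mpr fun ⟨_, hp⟩ hker => Subtype.ext <|
        eq_zero_of_totalDegree_le_of_mem_pow_vanishingIdeal_singleton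
          ((mem_restrictTotalDegree _ _ _).mp hp) (Ideal.Quotient.eq_zero_iff_mem.mp hker),
      fun t => by
        obtain ⟨p, rfl⟩ := Ideal.Quotient.mk_surjective t
        obtain ⟨q, hq, hpq⟩ := exists_totalDegree_le_sub_mem_pow_vanishingIdeal_singleton y D p
        exact ⟨⟨q, (mem_restrictTotalDegree _ _ _).mpr hq⟩,
          (Ideal.Quotient.mk_eq_mk_iff_sub_mem _ _).mpr (by simpa using neg_mem hpq)⟩⟩

instance [Finite σ] (y : σ → k) (D : ℕ) :
    Module.Finite k (MvPolynomial σ k ⧸ vanishingIdeal k {y} ^ (D + 1)) :=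
  Module.Finite.equiv (restrictTotalDegreeEquivQuotient y D)

lemma finrank_quotient_pow_vanishingIdeal_singleton [Fintype σ] (y : σ → k) (D : ℕ) :
    Module.finrank k (MvPolynomial σ k ⧸ vanishingIdeal k {y} ^ (D + 1)) =
      (D + Fintype.card σ).choose (Fintype.card σ) := by
  rw [← (restrictTotalDegreeEquivQuotient y D).finrank_eq, finrank_restrictTotalDegree_s14]

lemma exists_totalDegree_le_sub_mem_pow_and_mem_pow (S : Finset (σ → k)) {y : σ → k}
    (hy : y ∈ S) (D : ℕ) (f : MvPolynomial σ k) :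
    ∃ g : MvPolynomial σ k, g.totalDegree ≤ D + (D + 1) * (S.card - 1) ∧
      g - f ∈ vanishingIdeal k {y} ^ (D + 1) ∧
      ∀ z ∈ S, z ≠ y → g ∈ vanishingIdeal k {z} ^ (D + 1) := by
  classical
  obtain ⟨Q, hQdeg, hQS, hQy⟩ :=
    exists_totalDegree_le_eval_eq_zero_eval_ne_zero (S.erase y) (Finset.notMem_erase y S)
  obtain ⟨w, hw⟩ := Ideal.exists_mul_pow_sub_one_mem_pow inferInstance
    (mt (mem_vanishingIdeal_singleton_iff y Q).mp hQy) (D + 1)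
  obtain ⟨h, hdeg, hh⟩ := exists_totalDegree_le_sub_mem_pow_vanishingIdeal_singleton y D (f * w)
  refine ⟨h * Q ^ (D + 1), ?_, ?_, fun z hz hzy => ?_⟩
  · rw [Finset.card_erase_of_mem hy] at hQdeg
    calc (h * Q ^ (D + 1)).totalDegree ≤ h.totalDegree + (Q ^ (D + 1)).totalDegree :=
          totalDegree_mul _ _
      _ ≤ D + (D + 1) * Q.totalDegree := add_le_add hdeg (totalDegree_pow _ _)
      _ ≤ D + (D + 1) * (S.card - 1) := by gcongr
  · have : h * Q ^ (D + 1) - f = f * (w * Q ^ (D + 1) - 1) - (f * w - h) * Q ^ (D + 1) := by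
      ring
    rw [this]
    exact sub_mem (Ideal.mul_mem_left _ _ hw) (Ideal.mul_mem_right _ _ hh)
  · refine Ideal.mul_mem_left _ _ (Ideal.pow_mem_pow ?_ _)
    exact (mem_vanishingIdeal_singleton_iff z Q).mpr (hQS z (Finset.mem_erase.mpr ⟨hzy, hz⟩))

/-- Reduction modulo `𝔪_y ^ m`, i.e. the `(m - 1)`-jets, at the points `y ∈ S`. -/
def jets (S : Finset (σ → k)) (m d : ℕ) :
    restrictTotalDegree σ k d →ₗ[k]
      ((y : S) → MvPolynomial σ k ⧸ vanishingIdeal k {y.1} ^ m) :=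
  LinearMap.pi (fun _ => (Ideal.Quotient.mkₐ k _).toLinearMap) ∘ₗ
    (restrictTotalDegree σ k d).subtype

lemma jets_apply (S : Finset (σ → k)) (m d : ℕ) (p : restrictTotalDegree σ k d) (y : S) :
    jets S m d p y = Ideal.Quotient.mk _ p.1 := rfl

lemma jets_surjective (S : Finset (σ → k)) {D d : ℕ} (hd : D + (D + 1) * (S.card - 1) ≤ d) :
    Function.Surjective (jets S (D + 1) d) := by
  classical
  intro t
  have hsingle (y : S) :
      ∃ g : restrictTotalDegree σ k d, jets S (D + 1) d g = Pi.single y (t y) := by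
    obtain ⟨f, hf⟩ := Ideal.Quotient.mk_surjective (t y)
    obtain ⟨g, hdeg, hgy, hgz⟩ := exists_totalDegree_le_sub_mem_pow_and_mem_pow S y.2 D f
    refine ⟨⟨g, (mem_restrictTotalDegree _ _ _).mpr (hdeg.trans hd)⟩, ?_⟩
    funext z
    rw [jets_apply]
    rcases eq_or_ne z y with rfl | hzy
    · rw [Pi.single_eq_same, ← hf, Ideal.Quotient.mk_eq_mk_iff_sub_mem]
      exact hgy
    · rw [Pi.single_eq_of_ne hzy, Ideal.Quotient.eq_zero_iff_mem]
      exact hgz z z.2 (Subtype.coe_ne_coe.mpr hzy)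
  choose g hg using hsingle
  exact ⟨∑ y, g y, by simp only [map_sum, hg, Finset.univ_sum_single]⟩

end Field

end MvPolynomial

lemma ker_jets {k : Type*} [Field k] {n : ℕ} (S : Finset (Fin n → k)) (m d : ℕ) :
    LinearMap.ker (jets S m d) = Submodule.comap (restrictTotalDegree (Fin n) k d).subtype
      (Submodule.restrictScalars k (orderIdeal m (S : Set (Fin n → k)))) := by
  ext p
  simp [funext_iff, jets_apply, orderIdeal, Ideal.Quotient.eq_zero_iff_mem]

lemma HFm_coe_finset {k : Type*} [Field k] {n : ℕ} (S : Finset (Fin n → k)) {D d : ℕ}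
    (hd : D + (D + 1) * (S.card - 1) ≤ d) :
    HFm (D + 1) (S : Set (Fin n → k)) d = (D + n).choose n * S.card := by
  rw [HFm, affineHF, ← ker_jets, ((jets S (D + 1) d).quotKerEquivOfSurjective
      (jets_surjective S hd)).finrank_eq, Module.finrank_pi_fintype]
  simp [finrank_quotient_pow_vanishingIdeal_singleton, mul_comm]

/-- for a finite set `Y` of size `s ≥ 1` and `d ≥ 2ms - m - s`,
`HF^m(Y, d) = C(m+n-1, n) · s`. -/
theorem statement14 (k : Type*) [Field k] (n m s : ℕ) (hm : 1 ≤ m) (hs : 1 ≤ s)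
    (Y : Set (Fin n → k)) (hY : Y.Finite) (hcard : Y.ncard = s)
    (d : ℕ) (hd : 2 * m * s - m - s ≤ d) :
    HFm m Y d = (m + n - 1).choose n * s := by
  obtain ⟨D, rfl⟩ := Nat.exists_eq_add_of_le' hm
  obtain ⟨t, rfl⟩ := Nat.exists_eq_add_of_le' hs
  have hS : hY.toFinset.card = t + 1 := by rw [← hcard, Set.ncard_eq_toFinset_card Y hY]
  have hdeg : D + (D + 1) * (hY.toFinset.card - 1) ≤ d := by
    have : 2 * (D + 1) * (t + 1) - (D + 1) - (t + 1) = D + (D + 1) * t + D * t := by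
      rw [Nat.sub_sub, Nat.sub_eq_of_eq_add]
      ring
    rw [hS, Nat.add_sub_cancel]
    omega
  rw [← hY.coe_toFinset, HFm_coe_finset _ hdeg, hS, Nat.add_right_comm, Nat.add_sub_cancel]
end
end

section
/- Let k be a field and let I be an ideal of k[x_1,…,x_n]. Then for all integers m_1 ≥ m_2 ≥ 0, HF_I(m_1) · C(n+m_2, n) ≤ HF_I(m_2) · C(n+m_1, n), where C(a, n) denotes the binomial coefficient. -/
open MvPolynomial

noncomputable section

/-!
Fix the degree-lexicographic order. Since it refines the total degree, dividing by the whole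
ideal shows that the monomials of degree `≤ d` which are not leading monomials of elements of `I`
form a basis of `A_{≤d} / I_{≤d}`, so `HF_I(d)` counts them. They form a lower set `S` of `ℕⁿ`,
and for any lower set the number `N(d)` of its elements of degree `≤ d` satisfies
`(d + 1) N(d + 1) ≤ (n + d + 1) N(d)`: split `d + 1 = (d + 1 - |β|) + ∑ βᵢ` for each counted `β`,
and note that `β ↦ β - eᵢ` maps those with `βᵢ > 0` injectively into `S` in degree `≤ d`.
Since `C(n + d, n)` satisfies this recursion with equality, `N(d) / C(n + d, n)` is antitone.
-/

open scoped MonomialOrder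

theorem Nat.mul_choose_le_mul_choose_of_succ_mul_le {f : ℕ → ℕ} {n : ℕ}
    (hf : ∀ d, (d + 1) * f (d + 1) ≤ (n + d + 1) * f d) {m₁ m₂ : ℕ} (h : m₂ ≤ m₁) :
    f m₁ * (n + m₂).choose n ≤ f m₂ * (n + m₁).choose n := by
  induction m₁, h using Nat.le_induction with
  | base => rfl
  | succ m _ ih =>
    have hchoose : (n + m).choose n * (n + m + 1) = (n + m + 1).choose n * (m + 1) := by
      rw [Nat.choose_mul_succ_eq]
      congr 1
      omega
    refine Nat.le_of_mul_le_mul_left ?_ m.succ_pos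
    calc (m + 1) * (f (m + 1) * (n + m₂).choose n)
        = (m + 1) * f (m + 1) * (n + m₂).choose n := by ring
      _ ≤ (n + m + 1) * f m * (n + m₂).choose n := Nat.mul_le_mul_right _ (hf m)
      _ = (n + m + 1) * (f m * (n + m₂).choose n) := by ring
      _ ≤ (n + m + 1) * (f m₂ * (n + m).choose n) := Nat.mul_le_mul_left _ ih
      _ = (m + 1) * (f m₂ * (n + (m + 1)).choose n) := by
        rw [← add_assoc]
        linear_combination f m₂ * hchoose

theorem Submodule.finrank_quotient_comap_subtype_eq {R M : Type*} [Ring R]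
    [StrongRankCondition R] [AddCommGroup M] [Module R M] {P J V : Submodule R M}
    (hPV : P ≤ V) (hPJ : Disjoint P J) (hV : V ≤ P ⊔ J) :
    Module.finrank R (V ⧸ J.comap V.subtype) = Module.finrank R P := by
  have hcompl : IsCompl (J.comap V.subtype) (P.comap V.subtype) := by
    constructor
    · refine Submodule.disjoint_def.mpr fun x hxJ hxP => ?_
      exact Subtype.ext (Submodule.disjoint_def.mp hPJ x hxP hxJ)
    · refine Submodule.codisjoint_iff_exists_add_eq.mpr fun x => ?_
      obtain ⟨p, hp, j, hj, hpj⟩ := Submodule.mem_sup.mp (hV x.2)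
      have hjV : j ∈ V := by
        rw [← add_sub_cancel_left p j, hpj]
        exact V.sub_mem x.2 (hPV hp)
      exact ⟨⟨j, hjV⟩, ⟨p, hPV hp⟩, hj, hp, Subtype.ext (by simp [← hpj, add_comm])⟩
  exact ((Submodule.quotientEquivOfIsCompl _ _ hcompl).trans
    (Submodule.comapSubtypeEquivOfLe hPV)).finrank_eq

theorem MvPolynomial.finrank_restrictSupport {σ R : Type*} [CommRing R] [StrongRankCondition R]
    (s : Set (σ →₀ ℕ)) : Module.finrank R (restrictSupport R s) = s.ncard :=
  (Module.finrank_eq_nat_card_basis (basisRestrictSupport R s)).trans (Nat.card_coe_set_eq s)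

namespace MonomialOrder

variable {σ : Type*} (m : MonomialOrder σ) {k : Type*} [Field k]

def leadingMonomials (I : Ideal (MvPolynomial σ k)) : Set (σ →₀ ℕ) :=
  m.degree '' ((I : Set (MvPolynomial σ k)) \ {0})

variable {m} (I : Ideal (MvPolynomial σ k))

theorem isUpperSet_leadingMonomials : IsUpperSet (m.leadingMonomials I) := by
  classical
  rintro α β hαβ ⟨p, ⟨hpI, hp0⟩, rfl⟩
  obtain ⟨γ, rfl⟩ := exists_add_of_le hαβ
  have hγ : (monomial γ 1 : MvPolynomial σ k) ≠ 0 := by simp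
  refine ⟨monomial γ 1 * p, ⟨I.mul_mem_left _ hpI, mul_ne_zero hγ hp0⟩, ?_⟩
  rw [degree_mul hγ hp0, degree_monomial, if_neg one_ne_zero, add_comm]

theorem disjoint_restrictSupport_ideal {t : Set (σ →₀ ℕ)}
    (ht : Disjoint t (m.leadingMonomials I)) :
    Disjoint (restrictSupport k t) (I.restrictScalars k) :=
  Submodule.disjoint_def.mpr fun p hpt hpI => by_contra fun hp0 =>
    ht.ne_of_mem ((mem_restrictSupport_iff k).mp hpt (m.degree_mem_support hp0))
      ⟨p, ⟨hpI, hp0⟩, rfl⟩ rfl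

theorem div_ideal (f : MvPolynomial σ k) :
    ∃ q ∈ I, ∃ r, f = q + r ∧ (∀ c ∈ r.support, c ∉ m.leadingMonomials I) ∧
      m.degree r ≼[m] m.degree f := by
  obtain ⟨g, r, hf, hdeg, hr⟩ := m.div_set (B := (I : Set (MvPolynomial σ k)) \ {0})
    (fun b hb => (m.leadingCoeff_ne_zero_iff.mpr hb.2).isUnit) f
  refine ⟨_, ?_, r, hf, fun c hc ⟨b, hb, hbc⟩ => hr c hc b hb hbc.le, ?_⟩
  · rw [Finsupp.linearCombination_apply]
    exact I.sum_mem fun b _ => I.mul_mem_left _ b.2.1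
  · rw [eq_sub_of_add_eq' hf.symm]
    refine degree_sub_le.trans (max_le le_rfl ?_)
    rw [Finsupp.linearCombination_apply]
    refine degree_sum_le.trans (Finset.sup_le fun b _ => ?_)
    simpa only [smul_eq_mul, mul_comm] using hdeg b

theorem restrictSupport_le_sdiff_leadingMonomials_sup {s : Set (σ →₀ ℕ)}
    (hs : ∀ ⦃a b⦄, b ≼[m] a → a ∈ s → b ∈ s) :
    restrictSupport k s ≤ restrictSupport k (s \ m.leadingMonomials I) ⊔ I.restrictScalars k := by
  intro f hf
  rcases eq_or_ne f 0 with rfl | hf0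
  · exact zero_mem _
  obtain ⟨q, hqI, r, rfl, hr, hdeg⟩ := div_ideal (m := m) I f
  refine add_comm q r ▸ Submodule.add_mem_sup
    ((mem_restrictSupport_iff k).mpr fun c hc => ⟨?_, hr c hc⟩) hqI
  exact hs ((m.le_degree_of_mem_support hc).trans hdeg)
    ((mem_restrictSupport_iff k).mp hf (m.degree_mem_support hf0))

end MonomialOrder

namespace Finsupp

variable {σ : Type*}

def truncDegree [Finite σ] (S : Set (σ →₀ ℕ)) (d : ℕ) : Finset (σ →₀ ℕ) :=
  ((finite_of_degree_le d).inter_of_right S).toFinset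

section truncDegree

variable [Finite σ] {S : Set (σ →₀ ℕ)}

@[simp]
theorem mem_truncDegree {d : ℕ} {α : σ →₀ ℕ} : α ∈ truncDegree S d ↔ α ∈ S ∧ α.degree ≤ d := by
  simp [truncDegree]

theorem sum_truncDegree_succ_sub_degree (d : ℕ) :
    ∑ β ∈ truncDegree S (d + 1), (d + 1 - β.degree) =
      ∑ α ∈ truncDegree S d, (d + 1 - α.degree) := by
  refine (Finset.sum_subset (fun α hα => ?_) fun β hβ hβ' => ?_).symm
  · simp only [mem_truncDegree] at hα ⊢
    exact ⟨hα.1, by omega⟩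
  · simp only [mem_truncDegree, not_and, not_le] at hβ hβ'
    have := hβ' hβ.1
    omega

theorem sum_truncDegree_succ_apply_le (hS : IsLowerSet S) (d : ℕ) (i : σ) :
    ∑ β ∈ truncDegree S (d + 1), β i ≤ ∑ α ∈ truncDegree S d, (α i + 1) := by
  classical
  have hsub : {β ∈ truncDegree S (d + 1) | β i ≠ 0} ⊆
      (truncDegree S d).map (addRightEmbedding (single i 1)) := by
    intro β hβ
    simp only [Finset.mem_filter, mem_truncDegree] at hβ
    have hle : single i 1 ≤ β := single_le_iff.mpr (Nat.one_le_iff_ne_zero.mpr hβ.2)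
    refine Finset.mem_map.mpr ⟨β - single i 1, ?_, tsub_add_cancel_of_le hle⟩
    have hdeg := congrArg degree (tsub_add_cancel_of_le hle)
    rw [map_add, degree_single] at hdeg
    exact mem_truncDegree.mpr ⟨hS tsub_le_self hβ.1.1, by omega⟩
  calc ∑ β ∈ truncDegree S (d + 1), β i
      = ∑ β ∈ truncDegree S (d + 1) with β i ≠ 0, β i := (Finset.sum_filter_ne_zero _).symm
    _ ≤ ∑ β ∈ (truncDegree S d).map (addRightEmbedding (single i 1)), β i :=
      Finset.sum_le_sum_of_subset hsub
    _ = ∑ α ∈ truncDegree S d, (α i + 1) := by simp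

theorem succ_mul_card_truncDegree_succ_le [Fintype σ] (hS : IsLowerSet S) (d : ℕ) :
    (d + 1) * (truncDegree S (d + 1)).card ≤
      (Fintype.card σ + d + 1) * (truncDegree S d).card := by
  calc (d + 1) * (truncDegree S (d + 1)).card
      = ∑ β ∈ truncDegree S (d + 1), ((d + 1 - β.degree) + ∑ i, β i) := by
        rw [Finset.card_eq_sum_ones, Finset.mul_sum]
        refine Finset.sum_congr rfl fun β hβ => ?_
        rw [← degree_eq_sum]
        have := (mem_truncDegree.mp hβ).2
        omega
    _ = ∑ α ∈ truncDegree S d, (d + 1 - α.degree) +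
          ∑ i, ∑ β ∈ truncDegree S (d + 1), β i := by
        rw [Finset.sum_add_distrib, sum_truncDegree_succ_sub_degree, Finset.sum_comm]
    _ ≤ ∑ α ∈ truncDegree S d, (d + 1 - α.degree) + ∑ i, ∑ α ∈ truncDegree S d, (α i + 1) :=
        Nat.add_le_add_left (Finset.sum_le_sum fun i _ => sum_truncDegree_succ_apply_le hS d i) _
    _ = (Fintype.card σ + d + 1) * (truncDegree S d).card := by
        rw [Finset.sum_comm, ← Finset.sum_add_distrib, Finset.card_eq_sum_ones, Finset.mul_sum]
        refine Finset.sum_congr rfl fun α hα => ?_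
        rw [Finset.sum_add_distrib, ← degree_eq_sum, Finset.sum_const, Finset.card_univ]
        have := (mem_truncDegree.mp hα).2
        simp only [smul_eq_mul, mul_one]
        omega

end truncDegree

end Finsupp

open MonomialOrder Finsupp in
theorem affineHF_eq_card_truncDegree {k : Type*} [Field k] {n : ℕ}
    (I : Ideal (MvPolynomial (Fin n) k)) (d : ℕ) :
    affineHF I d = (truncDegree (degLex.leadingMonomials I)ᶜ d).card := by
  set s : Set (Fin n →₀ ℕ) := {α | α.degree ≤ d}
  have hs : ∀ ⦃a b⦄, b ≼[degLex] a → a ∈ s → b ∈ s := fun _ _ hba ha =>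
    (DegLex.monotone_degree hba).trans ha
  have hV : restrictTotalDegree (Fin n) k d = restrictSupport k s := rfl
  have ht : (truncDegree (degLex.leadingMonomials I)ᶜ d : Set (Fin n →₀ ℕ)) =
      s \ degLex.leadingMonomials I := by
    ext α
    simp [s, and_comm]
  rw [affineHF, Submodule.finrank_quotient_comap_subtype_eq (P := restrictSupport k (s \ _))
    (hV ▸ restrictSupport_mono k Set.sdiff_subset)
    (disjoint_restrictSupport_ideal I Set.disjoint_sdiff_left)
    (hV ▸ restrictSupport_le_sdiff_leadingMonomials_sup I hs),
    finrank_restrictSupport, ← ht, Set.ncard_coe_finset]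

/-- `HF_I(m₁) · C(n+m₂, n) ≤ HF_I(m₂) · C(n+m₁, n)` for `m₁ ≥ m₂`. -/
theorem statement17 (k : Type*) [Field k] (n : ℕ) (I : Ideal (MvPolynomial (Fin n) k))
    (m₁ m₂ : ℕ) (h : m₂ ≤ m₁) :
    affineHF I m₁ * (n + m₂).choose n ≤ affineHF I m₂ * (n + m₁).choose n := by
  simp only [affineHF_eq_card_truncDegree]
  refine Nat.mul_choose_le_mul_choose_of_succ_mul_le
    (f := fun d => (Finsupp.truncDegree (MonomialOrder.degLex.leadingMonomials I)ᶜ d).card)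
    (fun d => ?_) h
  simpa using Finsupp.succ_mul_card_truncDegree_succ_le
    (MonomialOrder.isUpperSet_leadingMonomials I).compl d
end
end

section
/- Let S be a finite subset of ℕ^n and let d ≥ 0. Define S^+ = S ∪ ⋃_{i=1}^n (S + e_i), where e_i is the i-th standard unit vector, and for T ⊆ ℕ^n let T_{≤d} denote the set of points of T whose coordinate sum is at most d. Then (d+1) · |(S^+)_{≤ d+1}| ≥ (n+d+1) · |S_{≤ d}|. -/
open MvPolynomial

noncomputable section

open Finset

theorem sum_comp_add_le_of_add_mem {M : Type*} [Add M] [IsRightCancelAdd M] [DecidableEq M]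
    {A B : Finset M} (v : M) (hAB : ∀ a ∈ A, a + v ∈ B) (f : M → ℕ) :
    ∑ a ∈ A, f (a + v) ≤ ∑ b ∈ B, f b :=
  calc ∑ a ∈ A, f (a + v)
      = ∑ b ∈ A.image (· + v), f b := (sum_image fun _ _ _ _ => add_right_cancel).symm
    _ ≤ ∑ b ∈ B, f b := sum_le_sum_of_subset (image_subset_iff.2 hAB)

section ShiftCounting

variable {ι : Type*} [Fintype ι] [DecidableEq ι]

theorem sum_add_single_one (a : ι → ℕ) (i : ι) :
    ∑ j, (a + Pi.single i 1 : ι → ℕ) j = ∑ j, a j + 1 := by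
  simp [sum_add_distrib]

/- Double counting: `a ∈ A` sends weight `d + 1 - |a|` to itself and `a i + 1` to each
`a + e_i`, in total `card ι + d + 1`; `b ∈ B` receives at most `(d + 1 - |b|) + ∑ i, b i = d + 1`. -/
theorem card_mul_le_card_mul_of_add_single_mem (d : ℕ) {A B : Finset (ι → ℕ)}
    (hA : ∀ a ∈ A, ∑ j, a j ≤ d) (hB : ∀ b ∈ B, ∑ j, b j ≤ d + 1) (hAB : A ⊆ B)
    (hshift : ∀ a ∈ A, ∀ i, a + Pi.single i 1 ∈ B) :
    (Fintype.card ι + d + 1) * #A ≤ (d + 1) * #B := by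
  have hout : ∀ a ∈ A,
      Fintype.card ι + d + 1 = (d + 1 - ∑ j, a j) + ∑ i, (a + Pi.single i 1 : ι → ℕ) i := by
    intro a ha
    simp only [Pi.add_apply, Pi.single_eq_same, sum_add_distrib, sum_const, card_univ,
      smul_eq_mul]
    have := hA a ha
    omega
  have hin : ∀ b ∈ B, (d + 1 - ∑ j, b j) + ∑ j, b j = d + 1 := fun b hb =>
    Nat.sub_add_cancel (hB b hb)
  calc (Fintype.card ι + d + 1) * #A
      = ∑ a ∈ A, ((d + 1 - ∑ j, a j) + ∑ i, (a + Pi.single i 1 : ι → ℕ) i) := by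
        rw [← sum_congr rfl hout, sum_const, smul_eq_mul, mul_comm]
    _ = ∑ a ∈ A, (d + 1 - ∑ j, a j) + ∑ i, ∑ a ∈ A, (a + Pi.single i 1 : ι → ℕ) i := by
        rw [sum_add_distrib, sum_comm]
    _ ≤ ∑ b ∈ B, (d + 1 - ∑ j, b j) + ∑ i, ∑ b ∈ B, b i :=
        add_le_add (sum_le_sum_of_subset hAB) (sum_le_sum fun i _ =>
          sum_comp_add_le_of_add_mem _ (fun a ha => hshift a ha i) (fun b => b i))
    _ = ∑ b ∈ B, (d + 1) := by
        rw [sum_comm (s := univ), ← sum_add_distrib, sum_congr rfl hin]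
    _ = (d + 1) * #B := by rw [sum_const, smul_eq_mul, mul_comm]

end ShiftCounting

theorem Set.finite_setOf_sum_le {ι : Type*} [Fintype ι] (d : ℕ) :
    {a : ι → ℕ | ∑ j, a j ≤ d}.Finite :=
  (Set.Finite.pi fun _ => Set.finite_Iic d).subset fun a ha j _ =>
    (single_le_sum (fun j _ => Nat.zero_le (a j)) (Finset.mem_univ j)).trans ha

theorem statement18_general (n d : ℕ) (S : Set (Fin n → ℕ)) :
    (n + d + 1) * {a ∈ S | ∑ j, a j ≤ d}.ncard ≤
    (d + 1) *
      {a ∈ S ∪ ⋃ i : Fin n, (fun a => a + Pi.single i 1) '' S |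
        ∑ j, a j ≤ d + 1}.ncard := by
  set SPlus := S ∪ ⋃ i : Fin n, (fun a => a + Pi.single i 1) '' S
  have hA : {a ∈ S | ∑ j, a j ≤ d}.Finite :=
    (Set.finite_setOf_sum_le d).subset fun a ha => ha.2
  have hB : {a ∈ SPlus | ∑ j, a j ≤ d + 1}.Finite :=
    (Set.finite_setOf_sum_le (d + 1)).subset fun a ha => ha.2
  have key := card_mul_le_card_mul_of_add_single_mem d (A := hA.toFinset) (B := hB.toFinset)
    (fun a ha => (hA.mem_toFinset.1 ha).2)
    (fun b hb => (hB.mem_toFinset.1 hb).2)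
    (fun a ha => by
      obtain ⟨haS, ha⟩ := hA.mem_toFinset.1 ha
      exact hB.mem_toFinset.2 ⟨Or.inl haS, ha.trans d.le_succ⟩)
    (fun a ha i => by
      obtain ⟨haS, ha⟩ := hA.mem_toFinset.1 ha
      refine hB.mem_toFinset.2 ⟨Or.inr (Set.mem_iUnion.2 ⟨i, a, haS, rfl⟩), ?_⟩
      rw [sum_add_single_one]
      omega)
  rwa [Fintype.card_fin, ← Set.ncard_eq_toFinset_card _ hA,
    ← Set.ncard_eq_toFinset_card _ hB] at key

/-- `(d+1)·|(S⁺)_{≤ d+1}| ≥ (n+d+1)·|S_{≤ d}|`. -/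
theorem statement18 (n d : ℕ) (S : Set (Fin n → ℕ)) (hS : S.Finite) :
    (n + d + 1) * {a ∈ S | ∑ j, a j ≤ d}.ncard ≤
    (d + 1) *
      {a ∈ S ∪ ⋃ i : Fin n, (fun a => a + Pi.single i 1) '' S |
        ∑ j, a j ≤ d + 1}.ncard :=
  statement18_general n d S

end
end

section
/- Let q be a prime power, n ≥ 1, m ≥ 1, ℓ ≥ 1, d ≥ 0, and let Y be a subset of F_q^n. Then HF^ℓ(F_q^n, d) · |cl_d^{ℓ,m}(Y)| ≤ q^n · C(m+n−1, n) · |Y|, where C(m+n−1, n) is the binomial coefficient. In particular (taking ℓ = m), HF^m(F_q^n, d) · |Y| ≤ HF^m(Y, d) · q^n holds for every Y ⊆ F_q^n. -/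
open MvPolynomial

noncomputable section

/-!
For finite `S ⊆ F_q^n` write `h(S) = HF^m(S, d)`. Since
`I^m(S ∪ T)_{≤d} = I^m(S)_{≤d} ∩ I^m(T)_{≤d}` and `I^m(S ∩ T)_{≤d}` contains
`I^m(S)_{≤d} + I^m(T)_{≤d}`, the function `h` is monotone and submodular, so Shearer's
inequality holds for it: if every point of `U` lies in at least `t` of the sets `T_a`, then
`t · h(U) ≤ ∑ₐ h(T_a)`. The substitution `P(X) ↦ P(X + a)` preserves degrees, so `h` is
translation invariant. Covering `F_q^n` by the `q^n` translates of `Z`, each point being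
covered `|Z|` times, gives `h(F_q^n) · |Z| ≤ q^n · h(Z)`. Covering `Y` by its points gives
`h(Y) ≤ |Y| · h({0})`, and `h({0})` is at most the number `C(m+n-1, n)` of monomials of degree
`< m`, since all other monomials vanish to order `m` at `0`. Finally
`I^m(Y)_{≤d} ⊆ I^ℓ(cl_d^{ℓ,m}(Y))_{≤d}`, so `HF^ℓ(cl_d^{ℓ,m}(Y), d) ≤ HF^m(Y, d)`.
-/

open Finset in
theorem mul_le_sum_of_submodular {α ι : Type*} [DecidableEq α] {f : Finset α → ℕ}
    (hf_mono : Monotone f) (hf_sub : ∀ S T, f (S ∪ T) + f (S ∩ T) ≤ f S + f T)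
    (hf_empty : f ∅ = 0) (A : Finset ι) (T : ι → Finset α) (U : Finset α) {t : ℕ}
    (hcover : ∀ x ∈ U, t ≤ #{a ∈ A | x ∈ T a}) :
    t * f U ≤ ∑ a ∈ A, f (T a) := by
  induction U using Finset.induction_on generalizing T with
  | empty => simp [hf_empty]
  | insert x U _ ih =>
    have hU : f U ≤ f (insert x U) := hf_mono (subset_insert x U)
    set gain := f (insert x U) - f U with hgain
    have ih' : t * f U ≤ ∑ a ∈ A, f (T a ∩ U) := by
      refine ih _ fun y hy => (hcover y (mem_insert_of_mem hy)).trans_eq ?_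
      simp [hy]
    have hstep : ∀ a ∈ A, f (T a ∩ U) + (if x ∈ T a then gain else 0) ≤ f (T a) := by
      intro a _
      split_ifs with hxa
      · -- submodularity: the gain of adding `x` is smaller on `U` than on `T a ∩ U`
        have h₁ : f (insert x U) ≤ f (T a ∪ U) :=
          hf_mono (insert_subset (mem_union_left _ hxa) subset_union_right)
        have h₂ := hf_sub (T a) U
        omega
      · simpa using hf_mono inter_subset_left
    have hsum := sum_le_sum hstep
    rw [sum_add_distrib, ← sum_filter, sum_const, smul_eq_mul] at hsum
    calc t * f (insert x U) = t * f U + t * gain := by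
          rw [← mul_add, Nat.add_sub_cancel' hU]
      _ ≤ ∑ a ∈ A, f (T a ∩ U) + #{a ∈ A | x ∈ T a} * gain :=
          add_le_add ih' (Nat.mul_le_mul_right _ (hcover x (mem_insert_self x U)))
      _ ≤ ∑ a ∈ A, f (T a) := hsum

namespace MvPolynomial

variable {σ R : Type*} [CommRing R]

def taylorEquiv (a : σ → R) : MvPolynomial σ R ≃ₐ[R] MvPolynomial σ R :=
  AlgEquiv.ofAlgHom (aeval fun i => X i + C (a i)) (aeval fun i => X i - C (a i))
    (by ext i; simp) (by ext i; simp)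

theorem taylorEquiv_apply (a : σ → R) (P : MvPolynomial σ R) :
    taylorEquiv a P = aeval (fun i => X i + C (a i)) P := rfl

theorem eval_taylorEquiv (a x : σ → R) (P : MvPolynomial σ R) :
    eval x (taylorEquiv a P) = eval (x + a) P := by
  change aeval x (aeval _ P) = aeval (x + a) P
  rw [← AlgHom.comp_apply, comp_aeval]
  congr 2
  ext i
  simp

theorem totalDegree_taylorEquiv_le (a : σ → R) (P : MvPolynomial σ R) :
    (taylorEquiv a P).totalDegree ≤ P.totalDegree := by
  classical
  conv_lhs => rw [P.as_sum, map_sum]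
  refine totalDegree_finsetSum_le fun s hs => ?_
  rw [taylorEquiv_apply, aeval_monomial, Finsupp.prod]
  refine (totalDegree_mul _ _).trans ?_
  rw [algebraMap_eq, totalDegree_C, zero_add]
  refine (totalDegree_finsetProd _ _).trans (le_trans ?_ (le_totalDegree hs))
  refine Finset.sum_le_sum fun i _ => (totalDegree_pow _ _).trans ?_
  have : (X i + C (a i) : MvPolynomial σ R).totalDegree ≤ 1 :=
    (totalDegree_add _ _).trans <| by
      simpa [totalDegree_C, X] using totalDegree_monomial_le (Finsupp.single i 1) (1 : R)
  simpa using Nat.mul_le_mul_left (s i) this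

theorem map_taylorEquiv_vanishingIdeal_singleton_le {K : Type*} [Field K] (a x : σ → K) :
    (vanishingIdeal K {x + a}).map (taylorEquiv a) ≤ vanishingIdeal K {x} := by
  rw [Ideal.map_le_iff_le_comap]
  intro P hP
  simp_all [mem_vanishingIdeal_iff, eval_taylorEquiv]

end MvPolynomial

section HilbertFunction

open Module

variable {K : Type*} [Field K] {n : ℕ}

abbrev degLE (I : Ideal (MvPolynomial (Fin n) K)) (d : ℕ) :
    Submodule K (MvPolynomial (Fin n) K) :=
  I.restrictScalars K ⊓ restrictTotalDegree (Fin n) K d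

theorem affineHF_add_finrank_degLE (I : Ideal (MvPolynomial (Fin n) K)) (d : ℕ) :
    affineHF I d + finrank K (degLE I d) = finrank K (restrictTotalDegree (Fin n) K d) := by
  rw [affineHF, ← Submodule.finrank_quotient_add_finrank
    (Submodule.comap (restrictTotalDegree (Fin n) K d).subtype (I.restrictScalars K))]
  congr 1
  rw [← (Submodule.comapSubtypeEquivOfLe (inf_le_right : degLE I d ≤ _)).finrank_eq,
    Submodule.comap_inf, Submodule.comap_subtype_self, inf_top_eq]

theorem affineHF_le_of_degLE_le {I J : Ideal (MvPolynomial (Fin n) K)} {d : ℕ}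
    (h : degLE I d ≤ degLE J d) : affineHF J d ≤ affineHF I d := by
  have := Submodule.finrank_mono h
  have := affineHF_add_finrank_degLE I d
  have := affineHF_add_finrank_degLE J d
  omega

theorem mem_orderIdeal {m : ℕ} {X : Set (Fin n → K)} {P : MvPolynomial (Fin n) K} :
    P ∈ orderIdeal m X ↔ ∀ x ∈ X, P ∈ vanishingIdeal K {x} ^ m := by
  simp [orderIdeal]

theorem orderIdeal_union (m : ℕ) (X Y : Set (Fin n → K)) :
    orderIdeal m (X ∪ Y) = orderIdeal m X ⊓ orderIdeal m Y :=
  iInf_union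

theorem orderIdeal_anti (m : ℕ) {X Y : Set (Fin n → K)} (h : X ⊆ Y) :
    orderIdeal m Y ≤ orderIdeal m X :=
  biInf_mono h

theorem HFm_mono (m d : ℕ) {X Y : Set (Fin n → K)} (h : X ⊆ Y) : HFm m X d ≤ HFm m Y d :=
  affineHF_le_of_degLE_le (inf_le_inf_right _ (orderIdeal_anti m h))

theorem HFm_empty (m d : ℕ) : HFm m (∅ : Set (Fin n → K)) d = 0 := by
  have htop : orderIdeal m (∅ : Set (Fin n → K)) = ⊤ := by simp [orderIdeal]
  have hV : degLE (⊤ : Ideal (MvPolynomial (Fin n) K)) d = restrictTotalDegree (Fin n) K d :=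
    inf_eq_right.2 fun _ _ => Submodule.mem_top
  have := affineHF_add_finrank_degLE (⊤ : Ideal (MvPolynomial (Fin n) K)) d
  rw [hV] at this
  rw [HFm, htop]
  omega

theorem HFm_union_add_HFm_inter_le (m d : ℕ) (X Y : Set (Fin n → K)) :
    HFm m (X ∪ Y) d + HFm m (X ∩ Y) d ≤ HFm m X d + HFm m Y d := by
  have hunion : degLE (orderIdeal m (X ∪ Y)) d =
      degLE (orderIdeal m X) d ⊓ degLE (orderIdeal m Y) d := by
    ext P
    simp only [orderIdeal_union, Submodule.mem_inf, Submodule.restrictScalars_mem]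
    tauto
  have hinter : degLE (orderIdeal m X) d ⊔ degLE (orderIdeal m Y) d ≤
      degLE (orderIdeal m (X ∩ Y)) d :=
    sup_le (inf_le_inf_right _ (orderIdeal_anti m Set.inter_subset_left))
      (inf_le_inf_right _ (orderIdeal_anti m Set.inter_subset_right))
  have := Submodule.finrank_sup_add_finrank_inf_eq (degLE (orderIdeal m X) d)
    (degLE (orderIdeal m Y) d)
  have := Submodule.finrank_mono hinter
  have := affineHF_add_finrank_degLE (orderIdeal m X) d
  have := affineHF_add_finrank_degLE (orderIdeal m Y) d
  have := affineHF_add_finrank_degLE (orderIdeal m (X ∪ Y)) d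
  have := affineHF_add_finrank_degLE (orderIdeal m (X ∩ Y)) d
  rw [hunion] at *
  unfold HFm
  omega

theorem HFm_clDegMult_le (d l m : ℕ) (Y : Set (Fin n → K)) :
    HFm l (clDegMult d l m Y) d ≤ HFm m Y d :=
  affineHF_le_of_degLE_le fun P ⟨hY, hdeg⟩ =>
    ⟨mem_orderIdeal.2 fun _ hx => hx P ((mem_restrictTotalDegree _ _ _).1 hdeg) hY, hdeg⟩

end HilbertFunction

section Translation

open Module Pointwise

variable {K : Type*} [Field K] {n : ℕ}

theorem taylorEquiv_mem_orderIdeal {m : ℕ} {X : Set (Fin n → K)} (a : Fin n → K)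
    {P : MvPolynomial (Fin n) K} (hP : P ∈ orderIdeal m (a +ᵥ X)) :
    taylorEquiv a P ∈ orderIdeal m X := by
  refine mem_orderIdeal.2 fun x hx => ?_
  have hmem : P ∈ vanishingIdeal K {x + a} ^ m :=
    mem_orderIdeal.1 hP _ (by simpa [add_comm] using Set.vadd_mem_vadd_set (a := a) hx)
  have hmap := Ideal.mem_map_of_mem (taylorEquiv a) hmem
  rw [Ideal.map_pow] at hmap
  exact Ideal.pow_right_mono (map_taylorEquiv_vanishingIdeal_singleton_le a x) m hmap

theorem HFm_le_HFm_vadd (m d : ℕ) (a : Fin n → K) (X : Set (Fin n → K)) :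
    HFm m X d ≤ HFm m (a +ᵥ X) d := by
  have hmap : (degLE (orderIdeal m (a +ᵥ X)) d).map (taylorEquiv a).toLinearEquiv.toLinearMap ≤
      degLE (orderIdeal m X) d := by
    rintro _ ⟨P, ⟨hP, hdeg⟩, rfl⟩
    exact ⟨taylorEquiv_mem_orderIdeal a hP, (mem_restrictTotalDegree _ _ _).2
      ((totalDegree_taylorEquiv_le a P).trans ((mem_restrictTotalDegree _ _ _).1 hdeg))⟩
  have := Submodule.finrank_mono hmap
  rw [LinearEquiv.finrank_map_eq] at this
  have := affineHF_add_finrank_degLE (orderIdeal m X) d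
  have := affineHF_add_finrank_degLE (orderIdeal m (a +ᵥ X)) d
  unfold HFm
  omega

theorem HFm_vadd (m d : ℕ) (a : Fin n → K) (X : Set (Fin n → K)) :
    HFm m (a +ᵥ X) d = HFm m X d :=
  le_antisymm (by simpa using HFm_le_HFm_vadd m d (-a) (a +ᵥ X)) (HFm_le_HFm_vadd m d a X)

end Translation

section LocalBound

open Module Pointwise

variable {K : Type*} [Field K] {n : ℕ}

theorem finrank_restrictTotalDegree_le (N : ℕ) :
    finrank K (restrictTotalDegree (Fin n) K N) ≤ (n + N).choose N := by
  rw [restrictTotalDegree, finrank_eq_nat_card_basis (basisRestrictSupport K _)]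
  -- an extra variable pads a monomial of degree `≤ N` to one of degree exactly `N`
  let pad :
      {s : Fin n →₀ ℕ | s.sum (fun _ e => e) ≤ N} → {P : Fin (n + 1) → ℕ // ∑ i, P i = N} :=
    fun s => ⟨Fin.cons (N - s.1.sum fun _ e => e) s.1, by
      have := s.2
      simp only [Set.mem_ofPred_eq, Finsupp.sum_fintype, implies_true] at this ⊢
      rw [Fin.sum_cons]
      omega⟩
  have hpad : Function.Injective pad := fun s t h => by
    have := congrArg (fun P => Fin.tail P.1) h
    exact Subtype.ext (DFunLike.coe_injective this)
  calc _ ≤ Nat.card (Sym (Fin (n + 1)) N) := Nat.card_le_card_of_injective _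
        ((Sym.equivNatSumOfFintype _ _).symm.injective.comp hpad)
    _ = (n + N).choose N := by simp [Sym.card_sym_eq_choose]

theorem monomial_mem_vanishingIdeal_zero_pow {m : ℕ} {s : Fin n →₀ ℕ}
    (hs : m ≤ s.sum fun _ e => e) :
    monomial s (1 : K) ∈ vanishingIdeal K {(0 : Fin n → K)} ^ m := by
  have hX (i : Fin n) : X i ∈ vanishingIdeal K {(0 : Fin n → K)} := by
    simp [mem_vanishingIdeal_iff]
  refine Ideal.pow_le_pow_right hs ?_
  rw [← prod_X_pow_eq_monomial, Finsupp.sum, ← Finset.prod_pow_eq_pow_sum]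
  exact Ideal.prod_mem_prod fun i _ => Ideal.pow_mem_pow (hX i) _

theorem restrictTotalDegree_le_degLE_sup (m d : ℕ) :
    restrictTotalDegree (Fin n) K d ≤
      degLE (orderIdeal m {(0 : Fin n → K)}) d ⊔ restrictTotalDegree (Fin n) K (m - 1) := by
  conv_lhs => rw [restrictTotalDegree, restrictSupport_eq_span]
  rw [Submodule.span_le]
  rintro _ ⟨s, hs, rfl⟩
  by_cases hm : m ≤ s.sum fun _ e => e
  · refine Submodule.mem_sup_left ⟨mem_orderIdeal.2 ?_, ?_⟩
    · rintro x rfl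
      exact monomial_mem_vanishingIdeal_zero_pow hm
    · exact (mem_restrictTotalDegree _ _ _).2 ((totalDegree_monomial_le _ _).trans hs)
  · refine Submodule.mem_sup_right ((mem_restrictTotalDegree _ _ _).2 ?_)
    exact (totalDegree_monomial_le _ _).trans (show (s.sum fun _ e => e) ≤ m - 1 by omega)

theorem HFm_singleton_le {m : ℕ} (hm : 1 ≤ m) (d : ℕ) (x : Fin n → K) :
    HFm m {x} d ≤ (m + n - 1).choose n := by
  have hx : ({x} : Set (Fin n → K)) = x +ᵥ {(0 : Fin n → K)} := by simp
  rw [hx, HFm_vadd]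
  have := Submodule.finrank_mono (restrictTotalDegree_le_degLE_sup (K := K) (n := n) m d)
  have := Submodule.finrank_add_le_finrank_add_finrank
    (degLE (orderIdeal m {(0 : Fin n → K)}) d) (restrictTotalDegree (Fin n) K (m - 1))
  have := affineHF_add_finrank_degLE (orderIdeal m ({0} : Set (Fin n → K))) d
  have := finrank_restrictTotalDegree_le (K := K) (n := n) (m - 1)
  rw [show n + (m - 1) = m + n - 1 by omega,
    Nat.choose_symm_of_eq_add (show m + n - 1 = m - 1 + n by omega)] at this
  unfold HFm
  omega

end LocalBound

section Counting

open Finset Pointwise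

variable {K : Type*} [Field K] {n : ℕ}

theorem mul_HFm_le_sum_of_cover [DecidableEq (Fin n → K)] (m d : ℕ) {ι : Type*} (A : Finset ι)
    (T : ι → Finset (Fin n → K)) (U : Finset (Fin n → K)) {t : ℕ}
    (hcover : ∀ x ∈ U, t ≤ #{a ∈ A | x ∈ T a}) :
    t * HFm m (U : Set (Fin n → K)) d ≤ ∑ a ∈ A, HFm m (T a : Set (Fin n → K)) d := by
  let h (S : Finset (Fin n → K)) : ℕ := HFm m (S : Set (Fin n → K)) d
  have hmono : Monotone h := fun _ _ hST => HFm_mono m d (coe_subset.2 hST)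
  have hsub (S T : Finset (Fin n → K)) : h (S ∪ T) + h (S ∩ T) ≤ h S + h T := by
    dsimp only [h]
    rw [coe_union, coe_inter]
    exact HFm_union_add_HFm_inter_le m d _ _
  have hempty : h ∅ = 0 := by
    dsimp only [h]
    rw [coe_empty]
    exact HFm_empty m d
  exact mul_le_sum_of_submodular hmono hsub hempty A T U hcover

theorem HFm_le_choose_mul_ncard {m : ℕ} (hm : 1 ≤ m) (d : ℕ) {Y : Set (Fin n → K)}
    (hY : Y.Finite) : HFm m Y d ≤ (m + n - 1).choose n * Y.ncard := by
  classical
  have hcover := mul_HFm_le_sum_of_cover m d (t := 1) hY.toFinset singleton hY.toFinset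
    fun y hy => card_pos.2 ⟨y, by simpa using hy⟩
  rw [Set.Finite.coe_toFinset, one_mul] at hcover
  calc HFm m Y d ≤ ∑ y ∈ hY.toFinset, HFm m ({y} : Set (Fin n → K)) d := by
        simpa using hcover
    _ ≤ ∑ _y ∈ hY.toFinset, (m + n - 1).choose n :=
        sum_le_sum fun y _ => HFm_singleton_le hm d y
    _ = (m + n - 1).choose n * Y.ncard := by
      rw [sum_const, smul_eq_mul, mul_comm, Set.ncard_eq_toFinset_card Y hY]

theorem HFm_univ_mul_ncard_le [Fintype K] (m d : ℕ) (Z : Set (Fin n → K)) :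
    HFm m (Set.univ : Set (Fin n → K)) d * Z.ncard ≤ HFm m Z d * Fintype.card K ^ n := by
  classical
  set Zf := Z.toFinite.toFinset
  have hcover (x : Fin n → K) (_ : x ∈ univ) : #Zf ≤ #{a : Fin n → K | x ∈ a +ᵥ Zf} := by
    refine (card_nbij' (fun z => x - z) (fun a => x - a) ?_ ?_ ?_ ?_).le <;>
      simp only [Set.MapsTo, Set.LeftInvOn, coe_filter, mem_univ, true_and, mem_coe,
        mem_vadd_finset, vadd_eq_add, Set.mem_ofPred_eq, sub_sub_cancel, implies_true]
    · exact fun z hz => ⟨z, hz, sub_add_cancel x z⟩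
    · rintro a ⟨z, hz, rfl⟩
      rwa [add_sub_cancel_left]
  have hshearer := mul_HFm_le_sum_of_cover m d univ (fun a : Fin n → K => a +ᵥ Zf) univ hcover
  simp only [coe_univ, coe_vadd_finset, Zf, Set.Finite.coe_toFinset, HFm_vadd, sum_const,
    card_univ, Fintype.card_fun, Fintype.card_fin, smul_eq_mul] at hshearer
  rw [Set.ncard_eq_toFinset_card Z Z.toFinite, mul_comm, mul_comm (HFm m Z d)]
  exact hshearer

end Counting

theorem statement19_general (K : Type*) [Field K] [Fintype K] (q n m l d : ℕ)
    (hq : Fintype.card K = q) (hm : 1 ≤ m)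
    (Y : Set (Fin n → K)) :
    HFm l (Set.univ : Set (Fin n → K)) d * (clDegMult d l m Y).ncard ≤
      q ^ n * (m + n - 1).choose n * Y.ncard ∧
    ∀ Z : Set (Fin n → K),
      HFm m (Set.univ : Set (Fin n → K)) d * Z.ncard ≤ HFm m Z d * q ^ n := by
  subst hq
  refine ⟨?_, HFm_univ_mul_ncard_le m d⟩
  calc HFm l Set.univ d * (clDegMult d l m Y).ncard
      ≤ HFm l (clDegMult d l m Y) d * Fintype.card K ^ n := HFm_univ_mul_ncard_le l d _
    _ ≤ HFm m Y d * Fintype.card K ^ n := by gcongr; exact HFm_clDegMult_le d l m Y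
    _ ≤ (m + n - 1).choose n * Y.ncard * Fintype.card K ^ n := by
      gcongr; exact HFm_le_choose_mul_ncard hm d Y.toFinite
    _ = Fintype.card K ^ n * (m + n - 1).choose n * Y.ncard := by ring

/-- `HF^ℓ(F_q^n, d) · |cl_d^{ℓ,m}(Y)| ≤ q^n · C(m+n-1, n) · |Y|`;
in particular `HF^m(F_q^n, d) · |Z| ≤ HF^m(Z, d) · q^n` for every `Z ⊆ F_q^n`. -/
theorem statement19 (K : Type*) [Field K] [Fintype K] (q n m l d : ℕ)
    (hq : Fintype.card K = q) (hn : 1 ≤ n) (hm : 1 ≤ m) (hl : 1 ≤ l)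
    (Y : Set (Fin n → K)) :
    HFm l (Set.univ : Set (Fin n → K)) d * (clDegMult d l m Y).ncard ≤
      q ^ n * (m + n - 1).choose n * Y.ncard ∧
    ∀ Z : Set (Fin n → K),
      HFm m (Set.univ : Set (Fin n → K)) d * Z.ncard ≤ HFm m Z d * q ^ n :=
  statement19_general K q n m l d hq hm Y

end
end
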